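/- arXiv:2407.14922 — 10 statements merged into one kernel-verified Lean document; each statement's English description precedes it below -/
import Mathlib

section
/- Let 0 < α ≤ 1 and let h belong to the class G(α). Then for every z in the open unit disk 𝔻, Re(z·h''(z)/h'(z)) ≤ α/2 − (1/(2α))·(1 − |z|²)·|h''(z)/h'(z)|². -/
/-!
Put `p = h''/h'`. The hypothesis says `Re (z p(z)) < α/2`, i.e. `|z p| < |α - z p|`, so
`z ↦ z p(z) / (α - z p(z))` maps the unit disk into itself. By Schwarz's lemma
`|p| ≤ |α - z p|`; squaring, `|p|² ≤ α² - 2α Re (z p) + |z|² |p|²`, which is the claim.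
-/

open Complex Metric

/-- The class `G(α)`: analytic functions `h` on the unit disk with `h(0) = 0`, `h'(0) = 1`,
`h'(z) ≠ 0` on the disk, and `Re (z h''(z) / (α h'(z))) < 1/2` on the disk. -/
noncomputable def GClass (α : ℝ) (h : ℂ → ℂ) : Prop :=
  AnalyticOnNhd ℂ h (ball (0:ℂ) 1) ∧ h 0 = 0 ∧ deriv h 0 = 1 ∧
    (∀ z ∈ ball (0:ℂ) 1, deriv h z ≠ 0) ∧
    ∀ z ∈ ball (0:ℂ) 1, (z * deriv (deriv h) z / ((α : ℂ) * deriv h z)).re < 1/2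

open Set

theorem dslope_id_mul_zero {g : ℂ → ℂ} (hg : DifferentiableAt ℂ g 0) (z : ℂ) :
    dslope (fun w => w * g w) 0 z = g z := by
  rcases eq_or_ne z 0 with rfl | hz
  · rw [dslope_same]
    simpa using ((hasDerivAt_id' (0 : ℂ)).fun_mul hg.hasDerivAt).deriv
  · simpa using dslope_sub_smul_of_ne g (a := (0 : ℂ)) hz

theorem norm_le_one_of_forall_norm_mul_lt_one {g : ℂ → ℂ}
    (hg : DifferentiableOn ℂ g (ball 0 1))
    (hmaps : ∀ z ∈ ball (0 : ℂ) 1, ‖z * g z‖ < 1) {z : ℂ} (hz : z ∈ ball (0 : ℂ) 1) :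
    ‖g z‖ ≤ 1 := by
  have hφ : DifferentiableOn ℂ (fun w => w * g w) (ball 0 1) := differentiableOn_id.mul hg
  have hφmaps : MapsTo (fun w => w * g w) (ball 0 1) (closedBall (0 * g 0) 1) := by
    intro w hw
    simpa using (hmaps w hw).le
  have := Complex.norm_dslope_le_div_of_mapsTo_ball hφ hφmaps hz
  rwa [dslope_id_mul_zero (hg.differentiableAt (ball_mem_nhds 0 one_pos)), div_one] at this

theorem norm_ofReal_sub_sq (a : ℝ) (w : ℂ) :
    ‖(a : ℂ) - w‖ ^ 2 = a ^ 2 - 2 * a * w.re + ‖w‖ ^ 2 := by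
  simp only [Complex.sq_norm, Complex.normSq_apply, sub_re, sub_im, ofReal_re, ofReal_im]
  ring

theorem norm_lt_norm_ofReal_sub_of_re_lt {a : ℝ} (ha : 0 < a) {w : ℂ} (hw : w.re < a / 2) :
    ‖w‖ < ‖(a : ℂ) - w‖ := by
  refine lt_of_pow_lt_pow_left₀ 2 (norm_nonneg _) ?_
  rw [norm_ofReal_sub_sq]
  nlinarith

theorem re_mul_le_of_re_mul_lt {α : ℝ} (hα : 0 < α) {p : ℂ → ℂ}
    (hp : DifferentiableOn ℂ p (ball 0 1))
    (hre : ∀ z ∈ ball (0 : ℂ) 1, (z * p z).re < α / 2) {z : ℂ} (hz : z ∈ ball (0 : ℂ) 1) :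
    (z * p z).re ≤ α / 2 - 1 / (2 * α) * (1 - ‖z‖ ^ 2) * ‖p z‖ ^ 2 := by
  have hden : ∀ w ∈ ball (0 : ℂ) 1, (α : ℂ) - w * p w ≠ 0 := fun w hw =>
    norm_pos_iff.mp ((norm_nonneg _).trans_lt (norm_lt_norm_ofReal_sub_of_re_lt hα (hre w hw)))
  have hg : DifferentiableOn ℂ (fun w => p w / ((α : ℂ) - w * p w)) (ball 0 1) :=
    hp.div ((differentiableOn_const _).sub (differentiableOn_id.mul hp)) hden
  have hmaps : ∀ w ∈ ball (0 : ℂ) 1, ‖w * (p w / ((α : ℂ) - w * p w))‖ < 1 := by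
    intro w hw
    rw [← mul_div_assoc, norm_div, div_lt_one (norm_pos_iff.mpr (hden w hw))]
    exact norm_lt_norm_ofReal_sub_of_re_lt hα (hre w hw)
  have hbound : ‖p z‖ ^ 2 ≤ α ^ 2 - 2 * α * (z * p z).re + ‖z‖ ^ 2 * ‖p z‖ ^ 2 := by
    have := norm_le_one_of_forall_norm_mul_lt_one hg hmaps hz
    rw [norm_div, div_le_one (norm_pos_iff.mpr (hden z hz))] at this
    have := pow_le_pow_left₀ (norm_nonneg _) this 2
    rwa [norm_ofReal_sub_sq, norm_mul, mul_pow] at this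
  rw [show 1 / (2 * α) * (1 - ‖z‖ ^ 2) * ‖p z‖ ^ 2 = (1 - ‖z‖ ^ 2) * ‖p z‖ ^ 2 / (2 * α) by ring,
    le_sub_iff_add_le, ← le_sub_iff_add_le', div_le_iff₀ (by positivity)]
  nlinarith

theorem stmt_0_general {α : ℝ} (hα0 : 0 < α) {h : ℂ → ℂ} (hG : GClass α h) :
    ∀ z ∈ ball (0:ℂ) 1,
      (z * deriv (deriv h) z / deriv h z).re ≤
        α / 2 - (1 / (2 * α)) * (1 - ‖z‖ ^ 2) *
          (‖deriv (deriv h) z / deriv h z‖) ^ 2 := by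
  obtain ⟨hh, -, -, hne, hre⟩ := hG
  have hp : DifferentiableOn ℂ (fun z => deriv (deriv h) z / deriv h z) (ball 0 1) :=
    hh.deriv.deriv.differentiableOn.div hh.deriv.differentiableOn hne
  have hre' : ∀ z ∈ ball (0 : ℂ) 1, (z * (deriv (deriv h) z / deriv h z)).re < α / 2 := by
    intro z hz
    have := hre z hz
    rw [show z * deriv (deriv h) z / (α * deriv h z) = z * (deriv (deriv h) z / deriv h z) / α by
      ring, div_ofReal_re, div_lt_iff₀ hα0] at this
    linarith
  intro z hz
  rw [mul_div_assoc]
  exact re_mul_le_of_re_mul_lt hα0 hp hre' hz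

theorem stmt_0 {α : ℝ} (hα0 : 0 < α) (hα1 : α ≤ 1) {h : ℂ → ℂ} (hG : GClass α h) :
    ∀ z ∈ ball (0:ℂ) 1,
      (z * deriv (deriv h) z / deriv h z).re ≤
        α / 2 - (1 / (2 * α)) * (1 - ‖z‖ ^ 2) *
          (‖deriv (deriv h) z / deriv h z‖) ^ 2 :=
  stmt_0_general hα0 hG
end

section
/- Let 0 < α ≤ 1 and let h belong to the class G(α). If there exists a point z₀ in the open unit disk 𝔻 at which Re(z₀·h''(z₀)/h'(z₀)) = α/2 − (1/(2α))·(1 − |z₀|²)·|h''(z₀)/h'(z₀)|², then there exists ζ ∈ ℂ with |ζ| = 1 such that h'(z) = (1 − ζz)^α for all z ∈ 𝔻. -/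
open Complex Metric

theorem stmt_1 {α : ℝ} (hα0 : 0 < α) (hα1 : α ≤ 1) {h : ℂ → ℂ} (hG : GClass α h)
    {z₀ : ℂ} (hz₀ : z₀ ∈ ball (0:ℂ) 1)
    (heq : (z₀ * deriv (deriv h) z₀ / deriv h z₀).re =
      α / 2 - (1 / (2 * α)) * (1 - ‖z₀‖ ^ 2) *
        (‖deriv (deriv h) z₀ / deriv h z₀‖) ^ 2) :
    ∃ ζ : ℂ, ‖ζ‖ = 1 ∧
      ∀ z ∈ ball (0:ℂ) 1, deriv h z = (1 - ζ * z) ^ (α : ℂ) := by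
  obtain ⟨hAn, hh0, hd0, hne, hre⟩ := hG
  set f := deriv h with hf_def
  set f' := deriv f with hf'_def
  have hαC : (α : ℂ) ≠ 0 := by exact_mod_cast hα0.ne'
  have hfA : AnalyticOnNhd ℂ f (ball (0:ℂ) 1) := hAn.deriv
  have hf'A : AnalyticOnNhd ℂ f' (ball (0:ℂ) 1) := hfA.deriv
  -- the denominator
  set den : ℂ → ℂ := fun z => (α : ℂ) * f z - z * f' z with hden_def
  have hden_ne : ∀ z ∈ ball (0:ℂ) 1, den z ≠ 0 := by
    intro z hz hzero
    have hb : (α : ℂ) * f z ≠ 0 := mul_ne_zero hαC (hne z hz)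
    have : z * f' z = (α : ℂ) * f z := by
      have := sub_eq_zero.mp hzero; linear_combination -this
    have h1 : z * f' z / ((α : ℂ) * f z) = 1 := by rw [this, div_self hb]
    have := hre z hz
    rw [h1] at this
    norm_num at this
  have hdenA : AnalyticOnNhd ℂ den (ball (0:ℂ) 1) := by
    apply AnalyticOnNhd.sub
    · exact (analyticOnNhd_const).mul hfA
    · exact (analyticOnNhd_id).mul hf'A
  set ψ : ℂ → ℂ := fun z => f' z / den z with hψ_def
  have hψA : AnalyticOnNhd ℂ ψ (ball (0:ℂ) 1) := hf'A.div hdenA hden_ne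
  set φ : ℂ → ℂ := fun z => z * ψ z with hφ_def
  have hφA : AnalyticOnNhd ℂ φ (ball (0:ℂ) 1) := analyticOnNhd_id.mul hψA
  have hφ0 : φ 0 = 0 := by simp [hφ_def]
  -- `φ` maps the ball into itself
  have hmaps : Set.MapsTo φ (ball (0:ℂ) 1) (ball (φ 0) 1) := by
    intro z hz
    rw [hφ0, mem_ball, dist_zero_right]
    have hb : (α : ℂ) * f z ≠ 0 := mul_ne_zero hαC (hne z hz)
    set w : ℂ := z * f' z / ((α : ℂ) * f z) with hw_def
    have hwre : w.re < 1/2 := hre z hz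
    have hkey : ‖z * f' z‖ < ‖den z‖ := by
      have h1 : z * f' z = w * ((α : ℂ) * f z) := by
        rw [hw_def, div_mul_cancel₀ _ hb]
      have h2 : den z = (1 - w) * ((α : ℂ) * f z) := by
        simp only [hden_def]; linear_combination -h1
      have hblt : 0 < ‖(α : ℂ) * f z‖ := norm_pos_iff.mpr hb
      have h3 : ‖w‖ < ‖1 - w‖ := by
        have hlt : Complex.normSq w < Complex.normSq (1 - w) := by
          simp only [Complex.normSq_apply, Complex.sub_re, Complex.sub_im, Complex.one_re,
            Complex.one_im]
          nlinarith [sq_nonneg w.im]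
        have := Real.sqrt_lt_sqrt (Complex.normSq_nonneg _) hlt
        simpa [Complex.norm_def] using this
      calc ‖z * f' z‖ = ‖w‖ * ‖(α : ℂ) * f z‖ := by
            rw [h1, norm_mul]
        _ < ‖1 - w‖ * ‖(α : ℂ) * f z‖ :=
            mul_lt_mul_of_pos_right h3 hblt
        _ = ‖den z‖ := by
            rw [h2]; exact (norm_mul (1 - w) ((α : ℂ) * f z)).symm
    have hφz : φ z = (z * f' z) / den z := by
      simp only [hφ_def, hψ_def]; ring
    rw [hφz]
    show ‖z * f' z / den z‖ < 1
    rw [norm_div]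
    exact (div_lt_one (lt_of_le_of_lt (by positivity) hkey)).mpr hkey
  have hφD : DifferentiableOn ℂ φ (ball (0:ℂ) 1) :=
    fun z hz => ((hφA z hz).differentiableAt).differentiableWithinAt
  -- `dslope φ 0 z₀ = ψ z₀`
  have h0mem : (0:ℂ) ∈ ball (0:ℂ) 1 := by simp
  have hdsl : dslope φ 0 z₀ = ψ z₀ := by
    rcases eq_or_ne z₀ 0 with rfl | hz0
    · rw [dslope_same]
      have hψd : HasDerivAt ψ (deriv ψ 0) 0 := ((hψA 0 h0mem).differentiableAt).hasDerivAt
      have : HasDerivAt φ (1 * ψ 0 + 0 * deriv ψ 0) 0 := (hasDerivAt_id 0).mul hψd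
      simpa using this.deriv
    · rw [dslope_of_ne _ hz0, slope_def_field, hφ_def]
      field_simp
      ring
  -- `‖ψ z₀‖ = 1` from the hypothesis `heq`
  have hnorm : ‖ψ z₀‖ = 1 := by
    have hfne : f z₀ ≠ 0 := hne z₀ hz₀
    set w : ℂ := f' z₀ / f z₀ with hw_def
    have hf'w : f' z₀ = w * f z₀ := by rw [hw_def]; field_simp
    have hden_eq : den z₀ = ((α : ℂ) - z₀ * w) * f z₀ := by
      show (α : ℂ) * f z₀ - z₀ * f' z₀ = _
      rw [hf'w]; ring
    have hre_eq : (z₀ * f' z₀ / f z₀).re = (z₀ * w).re := by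
      rw [hw_def, mul_div_assoc]
    have habs : ‖z₀‖ ^ 2 = Complex.normSq z₀ := Complex.sq_norm z₀
    have habsw : ‖w‖ ^ 2 = Complex.normSq w := Complex.sq_norm w
    have hkey : Complex.normSq w = Complex.normSq ((α : ℂ) - z₀ * w) := by
      have heq' : 2 * α * (z₀ * w).re = α ^ 2 - (1 - Complex.normSq z₀) * Complex.normSq w := by
        rw [hre_eq, habs, habsw] at heq
        rw [heq]
        field_simp
      have hnsq : Complex.normSq (z₀ * w) = Complex.normSq z₀ * Complex.normSq w :=
        Complex.normSq_mul _ _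
      have hexp : Complex.normSq ((α : ℂ) - z₀ * w)
          = α ^ 2 - 2 * α * (z₀ * w).re + Complex.normSq (z₀ * w) := by
        simp only [Complex.normSq_apply, Complex.sub_re, Complex.sub_im, Complex.ofReal_re,
          Complex.ofReal_im]
        ring
      rw [hexp, hnsq, heq']; ring
    have habs_eq : ‖w‖ = ‖(α : ℂ) - z₀ * w‖ := by
      have := congrArg Real.sqrt hkey
      simpa [Complex.norm_def] using this
    have hwne : ‖w‖ ≠ 0 := by
      intro h0
      rw [h0] at habs_eq
      have : ((α:ℂ) - z₀ * w) = 0 := by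
        simpa [eq_comm] using (norm_eq_zero.mp habs_eq.symm)
      have hw0 : w = 0 := by
        have := norm_eq_zero.mp h0; exact this
      rw [hw0] at this
      simp at this
      exact hα0.ne' (by exact_mod_cast this)
    have : ‖ψ z₀‖ = ‖w‖ / ‖(α : ℂ) - z₀ * w‖ := by
      rw [hψ_def]
      simp only
      rw [hf'w, hden_eq, norm_div, norm_mul, norm_mul]
      rw [mul_div_mul_right _ _ (norm_ne_zero_iff.mpr hfne : ‖f z₀‖ ≠ 0)]
    rw [this, ← habs_eq, div_self hwne]
  -- Schwarz lemma equality case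
  have hdsl_norm : ‖dslope φ 0 z₀‖ = 1 / 1 := by
    rw [hdsl]; simpa using hnorm
  have hEq := Complex.affine_of_mapsTo_ball_of_exists_norm_dslope_eq_div hφD (hmaps.mono_right ball_subset_closedBall) hz₀ hdsl_norm
  set C : ℂ := ψ z₀ with hC_def
  have hCnorm : ‖C‖ = 1 := hnorm
  -- ψ is constantly C on the ball
  have hψ_const : ∀ z ∈ ball (0:ℂ) 1, ψ z = C := by
    have hne0 : ∀ z ∈ ball (0:ℂ) 1, z ≠ 0 → ψ z = C := by
      intro z hz hz0
      have := hEq hz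
      simp only [hφ0, hdsl, smul_eq_mul, sub_zero, zero_add] at this
      rw [hφ_def] at this
      exact mul_left_cancel₀ hz0 (by simpa [hC_def] using this)
    intro z hz
    rcases eq_or_ne z 0 with rfl | hz0
    · -- continuity argument at 0
      have hcont : ContinuousAt ψ 0 := ((hψA 0 h0mem).differentiableAt).continuousAt
      have h1 : Filter.Tendsto ψ (nhdsWithin 0 {(0:ℂ)}ᶜ) (nhds (ψ 0)) :=
        hcont.continuousWithinAt.tendsto
      have h2 : Filter.Tendsto ψ (nhdsWithin 0 {(0:ℂ)}ᶜ) (nhds C) := by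
        apply Filter.Tendsto.congr' _ tendsto_const_nhds
        filter_upwards [self_mem_nhdsWithin,
          mem_nhdsWithin_of_mem_nhds (ball_mem_nhds (0:ℂ) one_pos)] with x hx hx'
        exact (hne0 x hx' hx).symm
      exact tendsto_nhds_unique h1 h2
    · exact hne0 z hz hz0
  -- the differential equation: f' z * (1 + C z) = C * α * f z
  have hODE : ∀ z ∈ ball (0:ℂ) 1, f' z * (1 + C * z) = C * (α : ℂ) * f z := by
    intro z hz
    have := hψ_const z hz
    have h1 : f' z = C * den z := by
      rw [hψ_def] at this
      simp only at this
      rw [div_eq_iff (hden_ne z hz)] at this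
      exact this
    rw [hden_def] at h1
    linear_combination h1
  -- set up the candidate solution
  have hupos : ∀ z ∈ ball (0:ℂ) 1, 0 < (1 + C * z).re := by
    intro z hz
    have h1 : ‖C * z‖ < 1 := by
      rw [norm_mul, hCnorm, one_mul]
      simpa [mem_ball, dist_zero_right] using hz
    have h2 : -(‖C * z‖) ≤ (C * z).re :=
      (abs_le.1 (Complex.abs_re_le_norm (C * z))).1
    have : (1 + C * z).re = 1 + (C * z).re := by simp
    rw [this]; linarith
  have hune : ∀ z ∈ ball (0:ℂ) 1, (1 + C * z) ≠ 0 := by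
    intro z hz h0
    have := hupos z hz
    rw [h0] at this; simp at this
  set G : ℂ → ℂ := fun z => f z * (1 + C * z) ^ (-(α:ℂ)) with hG_def
  have hG' : ∀ z ∈ ball (0:ℂ) 1, HasDerivAt G 0 z := by
    intro z hz
    have hfd : HasDerivAt f (f' z) z := ((hfA z hz).differentiableAt).hasDerivAt
    have hud : HasDerivAt (fun z => 1 + C * z) C z := by
      simpa using ((hasDerivAt_id z).const_mul C).const_add (1:ℂ)
    have hslit : (1 + C * z) ∈ Complex.slitPlane := Or.inl (hupos z hz)
    have hpow : HasDerivAt (fun z => (1 + C * z) ^ (-(α:ℂ)))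
        ((-(α:ℂ)) * (1 + C * z) ^ ((-(α:ℂ)) - 1) * C) z := hud.cpow_const hslit
    have hmul := hfd.mul hpow
    have hzero : f' z * (1 + C * z) ^ (-(α:ℂ)) +
        f z * ((-(α:ℂ)) * (1 + C * z) ^ ((-(α:ℂ)) - 1) * C) = 0 := by
      have hsplit : (1 + C * z) ^ (-(α:ℂ))
          = (1 + C * z) ^ ((-(α:ℂ)) - 1) * (1 + C * z) := by
        have hadd := Complex.cpow_add ((-(α:ℂ)) - 1) 1 (hune z hz)
        rw [Complex.cpow_one] at hadd
        rw [show ((-(α:ℂ)) - 1) + 1 = -(α:ℂ) by ring] at hadd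
        exact hadd
      rw [hsplit]
      have := hODE z hz
      linear_combination ((1 + C * z) ^ ((-(α:ℂ)) - 1)) * this
    rw [hzero] at hmul
    exact hmul
  -- G is constant on the ball
  have hGD : DifferentiableOn ℂ G (ball (0:ℂ) 1) :=
    fun z hz => ((hG' z hz).differentiableAt).differentiableWithinAt
  have hGconst : ∀ z ∈ ball (0:ℂ) 1, G z = G 0 := by
    intro z hz
    apply (convex_ball (0:ℂ) 1).is_const_of_fderivWithin_eq_zero hGD _ hz h0mem
    intro x hx
    have h1 : fderiv ℂ G x = 0 := by
      have := (hG' x hx).hasFDerivAt.fderiv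
      rw [this]
      ext v
      simp
    rw [(((hG' x hx).differentiableAt)).fderivWithin (isOpen_ball.uniqueDiffWithinAt hx)]
    exact h1
  have hG0 : G 0 = 1 := by
    simp [hG_def, ← hf_def, hd0]
  refine ⟨-C, by simpa using hCnorm, ?_⟩
  intro z hz
  have hu : 1 - (-C) * z = 1 + C * z := by ring
  rw [hu]
  have hGz : f z * (1 + C * z) ^ (-(α:ℂ)) = 1 := by
    have := hGconst z hz; rw [hG0] at this; exact this
  have hpne : (1 + C * z) ^ ((α:ℂ)) ≠ 0 := by
    intro h0
    rcases (Complex.cpow_eq_zero_iff _ _).mp h0 with ⟨h1, -⟩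
    exact hune z hz h1
  rw [Complex.cpow_neg] at hGz
  field_simp at hGz
  exact hGz
end

section
/- Let 0 < α ≤ 1 and let h belong to the class G(α). Then there exists an analytic function φ on the open unit disk 𝔻 with |φ(z)| ≤ 1 for all z ∈ 𝔻 such that h''(z)·(z·φ(z) − 1) = α·φ(z)·h'(z) for all z ∈ 𝔻. -/
open Complex Metric

/-! The half-plane `Re w < 1/2` is the set of points closer to `0` than to `1`, so
`w = z h''/(α h')` gives `‖z h''‖ < ‖z h'' - α h'‖`. Hence `φ = h''/(z h'' - α h')` is analytic,
`z φ(z)` maps the disk into itself, and the Schwarz lemma gives `‖φ‖ ≤ 1`; the functional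
equation is a rearrangement of the definition of `φ`. -/

lemma Complex.norm_lt_norm_sub_one_of_re_lt_half {w : ℂ} (hw : w.re < 1 / 2) :
    ‖w‖ < ‖w - 1‖ := by
  have hsq : ‖w‖ ^ 2 < ‖w - 1‖ ^ 2 := by
    simp only [Complex.sq_norm, Complex.normSq_apply, Complex.sub_re, Complex.sub_im,
      Complex.one_re, Complex.one_im]
    nlinarith
  exact lt_of_pow_lt_pow_left₀ 2 (norm_nonneg _) hsq

lemma Complex.norm_lt_norm_sub_of_re_div_lt_half {a b : ℂ} (hb : b ≠ 0)
    (hab : (a / b).re < 1 / 2) : ‖a‖ < ‖a - b‖ := by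
  have h := Complex.norm_lt_norm_sub_one_of_re_lt_half hab
  rwa [div_sub_one hb, norm_div, norm_div,
    div_lt_div_iff_of_pos_right (norm_pos_iff.mpr hb)] at h

lemma Complex.norm_le_div_of_norm_mul_le {φ : ℂ → ℂ} {R M : ℝ}
    (hφ : DifferentiableOn ℂ φ (ball 0 R)) (hbound : ∀ z ∈ ball (0:ℂ) R, ‖z * φ z‖ ≤ M)
    {z : ℂ} (hz : z ∈ ball (0:ℂ) R) : ‖φ z‖ ≤ M / R := by
  have hdslope : dslope (fun w => w * φ w) 0 z = φ z := by
    rcases eq_or_ne z 0 with rfl | hz0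
    · have hφ0 := ((hφ 0 hz).differentiableAt (isOpen_ball.mem_nhds hz)).hasDerivAt
      have hg : HasDerivAt (fun w => w * φ w) (1 * φ 0 + 0 * deriv φ 0) 0 :=
        (hasDerivAt_id' 0).mul hφ0
      simpa using hg.deriv
    · simpa using dslope_sub_smul_of_ne φ hz0
  have hmaps : Set.MapsTo (fun w => w * φ w) (ball 0 R) (closedBall (0 * φ 0) M) := by
    intro w hw
    simpa using hbound w hw
  have hd : DifferentiableOn ℂ (fun w => w * φ w) (ball 0 R) := differentiableOn_id.mul hφ
  simpa [hdslope] using norm_dslope_le_div_of_mapsTo_ball hd hmaps hz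

theorem stmt_2_general {α : ℝ} (hα0 : 0 < α) {h : ℂ → ℂ} (hG : GClass α h) :
    ∃ φ : ℂ → ℂ, AnalyticOnNhd ℂ φ (ball (0:ℂ) 1) ∧
      (∀ z ∈ ball (0:ℂ) 1, ‖φ z‖ ≤ 1) ∧
      ∀ z ∈ ball (0:ℂ) 1,
        deriv (deriv h) z * (z * φ z - 1) = (α : ℂ) * φ z * deriv h z := by
  obtain ⟨hA, -, -, hne, hre⟩ := hG
  set D : ℂ → ℂ := fun z => z * deriv (deriv h) z - α * deriv h z
  have hkey : ∀ z ∈ ball (0:ℂ) 1, ‖z * deriv (deriv h) z‖ < ‖D z‖ := fun z hz =>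
    Complex.norm_lt_norm_sub_of_re_div_lt_half
      (mul_ne_zero (ofReal_ne_zero.mpr hα0.ne') (hne z hz)) (hre z hz)
  have hD : ∀ z ∈ ball (0:ℂ) 1, D z ≠ 0 := fun z hz =>
    norm_pos_iff.mp ((norm_nonneg _).trans_lt (hkey z hz))
  have hA2 := hA.deriv.deriv
  have hφ : AnalyticOnNhd ℂ (fun z => deriv (deriv h) z / D z) (ball 0 1) :=
    hA2.div ((analyticOnNhd_id.mul hA2).sub (analyticOnNhd_const.mul hA.deriv)) hD
  refine ⟨_, hφ, fun z hz => ?_, fun z hz => ?_⟩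
  · refine div_one (1 : ℝ) ▸ Complex.norm_le_div_of_norm_mul_le hφ.differentiableOn
      (fun w hw => ?_) hz
    rw [mul_div_assoc', norm_div, div_le_one (norm_pos_iff.mpr (hD w hw))]
    exact (hkey w hw).le
  · have hDz := hD z hz
    field_simp
    ring

theorem stmt_2 {α : ℝ} (hα0 : 0 < α) (hα1 : α ≤ 1) {h : ℂ → ℂ} (hG : GClass α h) :
    ∃ φ : ℂ → ℂ, AnalyticOnNhd ℂ φ (ball (0:ℂ) 1) ∧
      (∀ z ∈ ball (0:ℂ) 1, ‖φ z‖ ≤ 1) ∧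
      ∀ z ∈ ball (0:ℂ) 1,
        deriv (deriv h) z * (z * φ z - 1) = (α : ℂ) * φ z * deriv h z :=
  stmt_2_general hα0 hG
end

section
/- Let 0 < α ≤ 1 and let h belong to the class G(α). Then there exists an analytic function ω on the open unit disk 𝔻 with ω(0) = 0 and |ω(z)| < 1 for all z ∈ 𝔻 such that h'(z) = (1 − ω(z))^α for all z ∈ 𝔻; in particular h'(z) is subordinate to (1 − z)^α. -/
/-!
Write `h' = exp F` with `F 0 = 0` and put `g = F / α`, `ω = 1 - exp g`; the hypothesis on `h`
says `Re (z g'(z)) < 1/2`. Since `ω' = (ω - 1) g'`, if `‖ω‖` reached `1` in the disk, Jack's lemma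
at a point `z₀` of least modulus where it does would give `z₀ ω'(z₀) = k ω(z₀)` with `k ≥ 1`, hence
`Re (z₀ g'(z₀)) = k Re (ω/(ω - 1)) = k/2 ≥ 1/2`, since `Re (w/(w - 1)) = 1/2` on the unit circle.
So `‖ω‖ < 1`, in particular `Re (1 - ω) > 0`, so `log (1 - ω) = g` and
`(1 - ω) ^ α = exp (α g) = h'`.
-/

open Complex Metric

open Set ComplexConjugate

lemma exists_hasDerivAt_eq_mul_exp {f : ℂ → ℂ} {c : ℂ} {r : ℝ}
    (hf : DifferentiableOn ℂ f (ball c r)) (hf0 : ∀ z ∈ ball c r, f z ≠ 0) :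
    ∃ F : ℂ → ℂ, F c = 0 ∧ (∀ z ∈ ball c r, HasDerivAt F (deriv f z / f z) z) ∧
      ∀ z ∈ ball c r, f z = f c * exp (F z) := by
  obtain ⟨F, hF0, hF⟩ := ((hf.deriv isOpen_ball).div hf hf0).isExactOn_ball.with_val_at c 0
  refine ⟨F, hF0, hF, fun z hz => ?_⟩
  have hderiv : ∀ z ∈ ball c r, HasDerivAt (fun z => exp (-F z) * f z) 0 z := by
    intro z hz
    have hfz := (hf.differentiableAt (isOpen_ball.mem_nhds hz)).hasDerivAt
    have hexp : HasDerivAt (fun z => exp (-F z)) (exp (-F z) * -(deriv f z / f z)) z :=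
      (hF z hz).neg.cexp
    refine (hexp.mul hfz).congr_deriv ?_
    field_simp [hf0 z hz]
    ring
  have hconst := isOpen_ball.is_const_of_deriv_eq_zero (convex_ball c r).isPreconnected
    (fun z hz => (hderiv z hz).differentiableAt.differentiableWithinAt)
    (fun z hz => (hderiv z hz).deriv) hz (mem_ball_self (pos_of_mem_ball hz))
  rw [hF0, neg_zero, exp_zero, one_mul] at hconst
  rw [← hconst, mul_right_comm, ← exp_add, neg_add_cancel, exp_zero, one_mul]

lemma eqOn_log_exp_comp {g : ℂ → ℂ} {s : Set ℂ} (hs : IsOpen s) (hs' : IsPreconnected s)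
    (hg : DifferentiableOn ℂ g s) (hslit : ∀ z ∈ s, exp (g z) ∈ slitPlane) {c : ℂ} (hc : c ∈ s)
    (hgc₁ : -Real.pi < (g c).im) (hgc₂ : (g c).im ≤ Real.pi) :
    EqOn (fun z => log (exp (g z))) g s := by
  have hderiv : ∀ z ∈ s, HasDerivAt (fun z => log (exp (g z))) (deriv g z) z := by
    intro z hz
    have hgz := (hg.differentiableAt (hs.mem_nhds hz)).hasDerivAt
    convert hgz.cexp.clog (hslit z hz) using 1
    field_simp [exp_ne_zero]
  exact hs.eqOn_of_deriv_eq hs' (fun z hz => (hderiv z hz).differentiableAt.differentiableWithinAt)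
    hg (fun z hz => (hderiv z hz).deriv) hc (log_exp hgc₁ hgc₂)

lemma re_div_sub_one_of_norm_eq_one {w : ℂ} (hw : ‖w‖ = 1) (hw1 : w ≠ 1) :
    (w / (w - 1)).re = 1 / 2 := by
  have hsq : w.re * w.re + w.im * w.im = 1 := by
    rw [← normSq_apply, ← Complex.sq_norm, hw, one_pow]
  have hre : w.re < 1 := by
    refine lt_of_le_of_ne (hw ▸ re_le_norm w) fun h => hw1 (Complex.ext h ?_)
    simpa [h] using hsq
  have hden : normSq (w - 1) = 2 * (1 - w.re) := by
    rw [normSq_apply, sub_re, sub_im, one_re, one_im]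
    linear_combination hsq
  rw [div_re, hden, ← add_div, div_eq_iff (by linarith)]
  simp only [sub_re, sub_im, one_re, one_im]
  linear_combination hsq

lemma hasDerivAt_nonneg_of_isMaxOn_Icc {f : ℝ → ℝ} {f' a b : ℝ} (hba : b < a)
    (hf : HasDerivAt f f' a) (hmax : IsMaxOn f (Icc b a) a) : 0 ≤ f' := by
  have hcone : b - a ∈ posTangentConeAt (Icc b a) a :=
    sub_mem_posTangentConeAt_of_segment_subset (segment_eq_Icc' a b ▸ by simp [hba.le])
  have := hmax.localize.hasFDerivWithinAt_nonpos hf.hasFDerivAt.hasFDerivWithinAt hcone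
  simp only [ContinuousLinearMap.toSpanSingleton_apply, smul_eq_mul] at this
  nlinarith

lemma HasDerivAt.norm_sq_comp {ω : ℂ → ℂ} {γ : ℝ → ℂ} {d v : ℂ} {s : ℝ}
    (hω : HasDerivAt ω d (γ s)) (hγ : HasDerivAt γ v s) :
    HasDerivAt (fun t => ‖ω (γ t)‖ ^ 2) (2 * (d * v * conj (ω (γ s))).re) s := by
  simpa [Complex.inner] using (hω.comp s hγ).norm_sq

/-- Jack's lemma. -/
theorem exists_mul_deriv_eq_of_isMaxOn {ω : ℂ → ℂ} {R : ℝ} {z₀ : ℂ}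
    (hd : DifferentiableOn ℂ ω (ball 0 R)) (hz₀ : z₀ ∈ ball 0 R) (h0 : ω 0 = 0)
    (hmax : IsMaxOn (‖ω ·‖) (closedBall 0 ‖z₀‖) z₀) (hne : ω z₀ ≠ 0) :
    ∃ k : ℝ, 1 ≤ k ∧ z₀ * deriv ω z₀ = k * ω z₀ := by
  have hz₀0 : z₀ ≠ 0 := by rintro rfl; exact hne h0
  set M := ‖ω z₀‖
  -- `k = D / M ^ 2`: comparing with Schwarz along the radius through `z₀` gives `1 ≤ k`, and
  -- maximality of `‖ω‖` at `z₀` on the circle `‖z‖ = ‖z₀‖` makes `D` real.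
  set D := deriv ω z₀ * z₀ * conj (ω z₀)
  have hr : 0 < ‖z₀‖ := norm_pos_iff.2 hz₀0
  have hM : 0 < M := norm_pos_iff.2 hne
  have hω : HasDerivAt ω (deriv ω z₀) z₀ :=
    (hd.differentiableAt (isOpen_ball.mem_nhds hz₀)).hasDerivAt
  have schwarz : ∀ z ∈ ball (0:ℂ) ‖z₀‖, ‖ω z‖ ≤ M / ‖z₀‖ * ‖z‖ := by
    intro z hz
    have hmaps : MapsTo ω (ball 0 ‖z₀‖) (closedBall (ω 0) M) := fun w hw => by
      rw [h0, mem_closedBall_zero_iff]; exact hmax (ball_subset_closedBall hw)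
    simpa [h0] using Complex.dist_le_div_mul_dist_of_mapsTo_ball
      (hd.mono (ball_subset_ball (mem_ball_zero_iff.1 hz₀).le)) hmaps hz
  have radial : M ^ 2 ≤ D.re := by
    have hγ : HasDerivAt (fun t : ℝ => (t : ℂ) * z₀) z₀ 1 := by
      simpa using (hasDerivAt_id (1 : ℝ)).ofReal_comp.mul_const z₀
    have hderiv : HasDerivAt (fun t : ℝ => ‖ω (t * z₀)‖ ^ 2 - (M * t) ^ 2)
        (2 * D.re - 2 * M ^ 2) 1 := by
      refine ((HasDerivAt.norm_sq_comp (by rwa [ofReal_one, one_mul]) hγ).fun_sub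
        (((hasDerivAt_id (1 : ℝ)).const_mul M).fun_pow 2)).congr_deriv ?_
      simp [D, sq, mul_assoc]
    have hmaxI : IsMaxOn (fun t : ℝ => ‖ω (t * z₀)‖ ^ 2 - (M * t) ^ 2) (Icc 0 1) 1 := by
      rintro t ⟨ht0, ht1⟩
      suffices h : ‖ω (t * z₀)‖ ≤ M * t by
        change _ ≤ ‖ω (((1 : ℝ) : ℂ) * z₀)‖ ^ 2 - (M * 1) ^ 2
        rw [ofReal_one, one_mul, mul_one, sub_self, sub_nonpos]
        gcongr
      rcases ht1.lt_or_eq with htlt | rfl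
      · have hball : (t : ℂ) * z₀ ∈ ball (0 : ℂ) ‖z₀‖ := by
          rw [mem_ball_zero_iff, norm_mul, norm_real, Real.norm_of_nonneg ht0]
          exact mul_lt_of_lt_one_left hr htlt
        calc ‖ω (t * z₀)‖ ≤ M / ‖z₀‖ * ‖(t : ℂ) * z₀‖ := schwarz _ hball
          _ = M * t := by
            rw [norm_mul, norm_real, Real.norm_of_nonneg ht0]
            field_simp
      · simp [M]
    linarith [hasDerivAt_nonneg_of_isMaxOn_Icc zero_lt_one hderiv hmaxI]
  have angular : D.im = 0 := by
    have hγ : HasDerivAt (fun θ : ℝ => exp (θ * I) * z₀) (I * z₀) 0 := by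
      simpa using (((hasDerivAt_id (0 : ℝ)).ofReal_comp.mul_const I).cexp).mul_const z₀
    have hderiv : HasDerivAt (fun θ : ℝ => ‖ω (exp (θ * I) * z₀)‖ ^ 2) (-2 * D.im) 0 := by
      refine (HasDerivAt.norm_sq_comp (by rwa [ofReal_zero, zero_mul, exp_zero, one_mul]) hγ
        ).congr_deriv ?_
      rw [ofReal_zero, zero_mul, exp_zero, one_mul, mul_comm I, ← mul_assoc, mul_right_comm,
        mul_I_re]
      ring
    have hmaxθ : IsLocalMax (fun θ : ℝ => ‖ω (exp (θ * I) * z₀)‖ ^ 2) 0 := by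
      refine IsMaxOn.isLocalMax (fun θ _ => ?_) Filter.univ_mem
      change _ ≤ ‖ω (exp (((0 : ℝ) : ℂ) * I) * z₀)‖ ^ 2
      rw [ofReal_zero, zero_mul, exp_zero, one_mul]
      gcongr
      apply hmax
      rw [mem_closedBall_zero_iff, norm_mul, norm_exp_ofReal_mul_I, one_mul]
    linarith [hmaxθ.hasDerivAt_eq_zero hderiv]
  refine ⟨D.re / M ^ 2, (le_div_iff₀ (by positivity)).2 (by simpa using radial), ?_⟩
  have hD : D = D.re := Complex.ext rfl (by simp [angular])
  have hw : (M : ℂ) ^ 2 = ω z₀ * conj (ω z₀) := (mul_conj' _).symm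
  rw [ofReal_div, ← hD, ofReal_pow, hw]
  field_simp [hne, (map_ne_zero _).2 hne]
  simp only [D]
  ring

theorem exists_norm_eq_one_isMaxOn {ω : ℂ → ℂ} (hc : ContinuousOn ω (ball 0 1))
    (h0 : ‖ω 0‖ < 1) {z₁ : ℂ} (hz₁ : z₁ ∈ ball (0 : ℂ) 1) (h1 : 1 ≤ ‖ω z₁‖) :
    ∃ z₀ ∈ ball (0 : ℂ) 1, ‖ω z₀‖ = 1 ∧ IsMaxOn (‖ω ·‖) (closedBall 0 ‖z₀‖) z₀ := by
  have hsub : closedBall (0 : ℂ) ‖z₁‖ ⊆ ball 0 1 :=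
    closedBall_subset_ball (mem_ball_zero_iff.1 hz₁)
  set K := closedBall (0 : ℂ) ‖z₁‖ ∩ (‖ω ·‖) ⁻¹' Ici 1
  have hK : IsCompact K := (isCompact_closedBall 0 ‖z₁‖).of_isClosed_subset
    ((hc.mono hsub).norm.preimage_isClosed_of_isClosed isClosed_closedBall isClosed_Ici)
    inter_subset_left
  obtain ⟨z₀, ⟨hz₀K, hz₀1⟩, hmin⟩ := hK.exists_isMinOn
    ⟨z₁, mem_closedBall_zero_iff.2 le_rfl, h1⟩ continuous_norm.continuousOn
  have hinside : ∀ z ∈ ball (0 : ℂ) ‖z₀‖, ‖ω z‖ ≤ 1 := by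
    intro z hz
    by_contra! hlt
    have hzK : z ∈ K :=
      ⟨closedBall_subset_closedBall (mem_closedBall_zero_iff.1 hz₀K) (ball_subset_closedBall hz),
        hlt.le⟩
    exact (mem_ball_zero_iff.1 hz).not_ge (hmin hzK)
  have hz₀0 : ‖z₀‖ ≠ 0 := by
    rintro h
    rw [norm_eq_zero.1 h] at hz₀1
    exact h0.not_ge hz₀1
  have hclosed : ∀ z ∈ closedBall (0 : ℂ) ‖z₀‖, ‖ω z‖ ≤ 1 := by
    rw [← closure_ball 0 hz₀0]
    refine le_on_closure hinside (ContinuousOn.norm (hc.mono ?_)) continuousOn_const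
    rw [closure_ball 0 hz₀0]
    exact (closedBall_subset_closedBall (mem_closedBall_zero_iff.1 hz₀K)).trans hsub
  have hz₀eq : ‖ω z₀‖ = 1 := le_antisymm (hclosed z₀ (mem_closedBall_zero_iff.2 le_rfl)) hz₀1
  exact ⟨z₀, hsub hz₀K, hz₀eq, fun z hz => (hclosed z hz).trans hz₀eq.ge⟩

theorem norm_one_sub_exp_lt_one {g : ℂ → ℂ} (hg : DifferentiableOn ℂ g (ball 0 1))
    (hg0 : g 0 = 0) (hre : ∀ z ∈ ball (0 : ℂ) 1, (z * deriv g z).re < 1 / 2) :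
    ∀ z ∈ ball (0 : ℂ) 1, ‖1 - exp (g z)‖ < 1 := by
  set ω : ℂ → ℂ := fun z => 1 - exp (g z)
  have hω : DifferentiableOn ℂ ω (ball 0 1) := hg.cexp.const_sub 1
  have hω0 : ω 0 = 0 := by simp [ω, hg0]
  by_contra! ⟨z₁, hz₁, h1⟩
  obtain ⟨z₀, hz₀, hnorm, hmax⟩ :=
    exists_norm_eq_one_isMaxOn hω.continuousOn (by simp [hω0]) hz₁ h1
  obtain ⟨k, hk, hjack⟩ := exists_mul_deriv_eq_of_isMaxOn hω hz₀ hω0 hmax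
    (norm_ne_zero_iff.1 (hnorm ▸ one_ne_zero))
  have hderiv : deriv ω z₀ = (ω z₀ - 1) * deriv g z₀ := by
    have hgz := (hg.differentiableAt (isOpen_ball.mem_nhds hz₀)).hasDerivAt
    rw [(hgz.cexp.const_sub 1).deriv]
    simp [ω]
  have hw1 : ω z₀ - 1 ≠ 0 := by simp [ω, exp_ne_zero]
  have hkey : z₀ * deriv g z₀ = k * (ω z₀ / (ω z₀ - 1)) := by
    rw [hderiv] at hjack
    field_simp
    linear_combination hjack
  have := hre z₀ hz₀
  rw [hkey, re_ofReal_mul, re_div_sub_one_of_norm_eq_one hnorm (sub_ne_zero.1 hw1)] at this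
  linarith

theorem stmt_3_general {α : ℝ} (hα0 : 0 < α) {h : ℂ → ℂ} (hG : GClass α h) :
    ∃ ω : ℂ → ℂ, AnalyticOnNhd ℂ ω (ball (0:ℂ) 1) ∧ ω 0 = 0 ∧
      (∀ z ∈ ball (0:ℂ) 1, ‖ω z‖ < 1) ∧
      ∀ z ∈ ball (0:ℂ) 1, deriv h z = (1 - ω z) ^ (α : ℂ) := by
  obtain ⟨hA, -, hd0, hne, hre⟩ := hG
  have hα : (α : ℂ) ≠ 0 := ofReal_ne_zero.2 hα0.ne'
  obtain ⟨F, hF0, hF', hexpF⟩ := exists_hasDerivAt_eq_mul_exp hA.deriv.differentiableOn hne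
  set g : ℂ → ℂ := fun z => F z / α
  have hg' : ∀ z ∈ ball (0 : ℂ) 1,
      HasDerivAt g (deriv (deriv h) z / (α * deriv h z)) z := fun z hz =>
    ((hF' z hz).div_const (α : ℂ)).congr_deriv (by rw [div_div, mul_comm])
  have hg : DifferentiableOn ℂ g (ball 0 1) :=
    fun z hz => (hg' z hz).differentiableAt.differentiableWithinAt
  have hg0 : g 0 = 0 := by simp [g, hF0]
  have hω := norm_one_sub_exp_lt_one hg hg0 fun z hz => by
    rw [(hg' z hz).deriv, ← mul_div_assoc]
    exact hre z hz
  have hlog : EqOn (fun z => log (exp (g z))) g (ball 0 1) := by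
    refine eqOn_log_exp_comp isOpen_ball (convex_ball 0 1).isPreconnected hg (fun z hz => ?_)
      (mem_ball_self one_pos) (by simp [hg0, Real.pi_pos]) (by simp [hg0, Real.pi_pos.le])
    simpa using mem_slitPlane_of_norm_lt_one ((norm_sub_rev _ _).trans_lt (hω z hz))
  refine ⟨fun z => 1 - exp (g z), (hg.cexp.const_sub 1).analyticOnNhd isOpen_ball,
    by simp [hg0], hω, fun z hz => ?_⟩
  have hlogz : log (exp (g z)) = g z := hlog hz
  rw [sub_sub_cancel, cpow_def_of_ne_zero (exp_ne_zero _), hlogz, hexpF z hz, hd0, one_mul]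
  simp only [g]
  field_simp

theorem stmt_3 {α : ℝ} (hα0 : 0 < α) (hα1 : α ≤ 1) {h : ℂ → ℂ} (hG : GClass α h) :
    ∃ ω : ℂ → ℂ, AnalyticOnNhd ℂ ω (ball (0:ℂ) 1) ∧ ω 0 = 0 ∧
      (∀ z ∈ ball (0:ℂ) 1, ‖ω z‖ < 1) ∧
      ∀ z ∈ ball (0:ℂ) 1, deriv h z = (1 - ω z) ^ (α : ℂ) :=
  stmt_3_general hα0 hG
end

section
/- Let 0 < α ≤ 1, let h belong to the class G(α), and let φ be an analytic function on the open unit disk 𝔻 with |φ(z)| ≤ 1 for all z ∈ 𝔻 satisfying h''(z)·(z·φ(z) − 1) = α·φ(z)·h'(z) for all z ∈ 𝔻. Suppose that for some m ≥ 1 there exist pairwise distinct points ζ₁, …, ζ_{m+1} on the unit circle and real numbers t₁, …, t_{m+1} with 0 < t_k < 1 and t₁ + ⋯ + t_{m+1} = 1 such that h'(z) = ∏_{k=1}^{m+1} (1 − ζ_k z)^{α t_k} for all z ∈ 𝔻. Then φ is a finite Blaschke product of degree m. -/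
open Complex Metric

/-- `φ` is a finite Blaschke product of degree `m` on the unit disk:
`φ(z) = λ · ∏ (z - bₖ)/(1 - conj(bₖ) z)` with `|λ| = 1` and `bₖ ∈ 𝔻`. -/
def IsFiniteBlaschkeProduct (m : ℕ) (φ : ℂ → ℂ) : Prop :=
  ∃ (l : ℂ) (b : Fin m → ℂ), ‖l‖ = 1 ∧ (∀ k, b k ∈ ball (0:ℂ) 1) ∧
    ∀ z ∈ ball (0:ℂ) 1,
      φ z = l * ∏ k, (z - b k) / (1 - (starRingEnd ℂ) (b k) * z)

namespace Stmt6Aux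
open Finset

variable {m : ℕ} (ζ : Fin (m+1) → ℂ) (t : Fin (m+1) → ℝ)

/-- numerator polynomial function -/
noncomputable def Pf (z : ℂ) : ℂ :=
  ∑ k, (t k : ℂ) * ζ k * ∏ j ∈ univ.erase k, (1 - ζ j * z)

/-- denominator polynomial function -/
noncomputable def Qf (z : ℂ) : ℂ :=
  ∑ k, (t k : ℂ) * ∏ j ∈ univ.erase k, (1 - ζ j * z)

noncomputable def Ff (z : ℂ) : ℂ := ∏ j, (1 - ζ j * z)

lemma re_inv_ge (u : ℂ) (hu : ‖u‖ ≤ 1) (hu1 : u ≠ 1) :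
    (1/2 : ℝ) ≤ ((1 - u)⁻¹).re := by
  have h1 : (1 : ℂ) - u ≠ 0 := sub_ne_zero.mpr (Ne.symm hu1)
  have hsq : Complex.normSq (1 - u) > 0 := Complex.normSq_pos.mpr h1
  have hre : ((1 - u)⁻¹).re = (1 - u.re) / Complex.normSq (1 - u) := by
    rw [Complex.inv_re]; simp [Complex.sub_re]
  rw [hre, le_div_iff₀ hsq]
  have hn : Complex.normSq (1 - u) = 1 - 2 * u.re + Complex.normSq u := by
    simp [Complex.normSq_apply, Complex.sub_re, Complex.sub_im]
    ring
  have hns : Complex.normSq u ≤ 1 := by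
    have := Complex.sq_norm u
    nlinarith [norm_nonneg u]
  nlinarith

lemma Qf_ne_zero (hζ : ∀ k, ‖ζ k‖ = 1) (hζinj : Function.Injective ζ)
    (ht : ∀ k, 0 < t k) (htsum : (∑ k, t k) = 1) :
    ∀ w : ℂ, ‖w‖ ≤ 1 → Qf ζ t w ≠ 0 := by
  intro w hw
  by_cases hcase : ∃ i, ζ i * w = 1
  · obtain ⟨i, hi⟩ := hcase
    have hw0 : w ≠ 0 := by
      intro h; rw [h, mul_zero] at hi; exact one_ne_zero hi.symm
    have hQ : Qf ζ t w = (t i : ℂ) * ∏ j ∈ univ.erase i, (1 - ζ j * w) := by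
      rw [Qf, Finset.sum_eq_single i]
      · intro k _ hk
        have : (i : Fin (m+1)) ∈ univ.erase k := by
          simp [Finset.mem_erase, Ne.symm hk]
        rw [Finset.prod_eq_zero this (by rw [hi]; ring), mul_zero]
      · intro h; exact absurd (Finset.mem_univ i) h
    rw [hQ]
    apply mul_ne_zero
    · exact_mod_cast (ht i).ne'
    · apply Finset.prod_ne_zero_iff.mpr
      intro j hj
      rw [Finset.mem_erase] at hj
      intro hzero
      have : ζ j * w = 1 := by linear_combination -hzero
      have : ζ j = ζ i := by
        field_simp at hi this
        have hwi : ζ i = w⁻¹ := by field_simp; linear_combination hi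
        have hwj : ζ j = w⁻¹ := by field_simp; linear_combination this
        rw [hwi, hwj]
      exact hj.1 (hζinj this)
  · push_neg at hcase
    have hne : ∀ k, (1 : ℂ) - ζ k * w ≠ 0 := by
      intro k h
      exact hcase k (by linear_combination -h)
    have hfact : Qf ζ t w = Ff ζ w * ∑ k, (t k : ℂ) * (1 - ζ k * w)⁻¹ := by
      rw [Qf, Ff, Finset.mul_sum]
      apply Finset.sum_congr rfl
      intro k _
      rw [← Finset.prod_erase_mul univ _ (Finset.mem_univ k)]
      rw [show ∀ a b c : ℂ, a * b * (c * b⁻¹) = c * a * (b * b⁻¹) from fun a b c => by ring,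
        mul_inv_cancel₀ (hne k), mul_one]
    rw [hfact]
    apply mul_ne_zero
    · exact Finset.prod_ne_zero_iff.mpr fun j _ => hne j
    · intro hzero
      have hre : ((∑ k, (t k : ℂ) * (1 - ζ k * w)⁻¹).re) = 0 := by rw [hzero]; rfl
      have hge : (1/2 : ℝ) ≤ (∑ k, (t k : ℂ) * (1 - ζ k * w)⁻¹).re := by
        rw [Complex.re_sum]
        have : ∀ k ∈ (univ : Finset (Fin (m+1))),
            t k * (1/2 : ℝ) ≤ ((t k : ℂ) * (1 - ζ k * w)⁻¹).re := by
          intro k _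
          have habs : ‖ζ k * w‖ ≤ 1 := by
            rw [norm_mul, hζ k, one_mul]; exact hw
          have h1 : ζ k * w ≠ 1 := hcase k
          have := re_inv_ge (ζ k * w) habs h1
          have hrw : ((t k : ℂ) * (1 - ζ k * w)⁻¹).re = t k * ((1 - ζ k * w)⁻¹).re := by
            simp [Complex.mul_re]
          rw [hrw]
          exact mul_le_mul_of_nonneg_left this (ht k).le
        calc (1/2 : ℝ) = ∑ k, t k * (1/2 : ℝ) := by
              rw [← Finset.sum_mul, htsum, one_mul]
          _ ≤ _ := Finset.sum_le_sum this
      rw [hre] at hge; norm_num at hge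


lemma refl_term (hζ : ∀ k, ‖ζ k‖ = 1) (k : Fin (m+1)) (z : ℂ) (hz : z ≠ 0) :
    ζ k * ∏ j ∈ univ.erase k, (1 - ζ j * z)
      = ((-1)^m * ∏ j, ζ j) * z^m * ∏ j ∈ univ.erase k, (1 - (ζ j)⁻¹ * z⁻¹) := by
  have hζ0 : ∀ j, ζ j ≠ 0 := fun j => by
    intro h; have := hζ j; rw [h] at this; simp at this
  have hcard : (univ.erase k).card = m := by
    rw [Finset.card_erase_of_mem (Finset.mem_univ k), Finset.card_univ, Fintype.card_fin]
    omega
  have hstep : ∀ j ∈ univ.erase k, (1 - (ζ j)⁻¹ * z⁻¹) = -(ζ j * z)⁻¹ * (1 - ζ j * z) := by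
    intro j _
    field_simp
    rw [sub_div, mul_div_cancel_left₀ _ (hζ0 j)]; ring
  rw [Finset.prod_congr rfl hstep, Finset.prod_mul_distrib]
  have hneg : ∏ j ∈ univ.erase k, -(ζ j * z)⁻¹
      = (-1)^m * ((∏ j ∈ univ.erase k, ζ j)⁻¹ * (z^m)⁻¹) := by
    have hc : ∀ j ∈ univ.erase k, -(ζ j * z)⁻¹ = (-1) * ((ζ j)⁻¹ * z⁻¹) := fun j _ => by
      rw [mul_inv]; ring
    rw [Finset.prod_congr rfl hc, Finset.prod_mul_distrib, Finset.prod_mul_distrib,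
      Finset.prod_const, Finset.prod_const, Finset.prod_inv_distrib, hcard, inv_pow]
  rw [hneg]
  have hE : (∏ j ∈ univ.erase k, ζ j) * (∏ j ∈ univ.erase k, ζ j)⁻¹ = 1 :=
    mul_inv_cancel₀ (Finset.prod_ne_zero_iff.mpr fun j _ => hζ0 j)
  have hZ : (z^m) * (z^m)⁻¹ = 1 := mul_inv_cancel₀ (pow_ne_zero _ hz)
  have hm : ((-1:ℂ))^m * (-1)^m = 1 := by rw [← mul_pow]; norm_num
  have hPE : (∏ j ∈ univ.erase k, ζ j) * ζ k = ∏ j, ζ j :=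
    Finset.prod_erase_mul _ _ (Finset.mem_univ k)
  calc ζ k * ∏ j ∈ univ.erase k, (1 - ζ j * z)
      = ((∏ j ∈ univ.erase k, ζ j) * (∏ j ∈ univ.erase k, ζ j)⁻¹) * ((z^m) * (z^m)⁻¹) *
        (((-1:ℂ))^m * (-1)^m) * (ζ k * ∏ j ∈ univ.erase k, (1 - ζ j * z)) := by
        rw [hE, hZ, hm]; ring
    _ = ((-1)^m * ((∏ j ∈ univ.erase k, ζ j) * ζ k)) * z^m *
        ((-1)^m * ((∏ j ∈ univ.erase k, ζ j)⁻¹ * (z^m)⁻¹) *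
          ∏ j ∈ univ.erase k, (1 - ζ j * z)) := by ring
    _ = _ := by rw [hPE]

lemma refl_id (hζ : ∀ k, ‖ζ k‖ = 1) (z : ℂ) (hz : z ≠ 0) :
    Pf ζ t z = ((-1)^m * ∏ j, ζ j) * z^m *
      (starRingEnd ℂ) (Qf ζ t (((starRingEnd ℂ) z)⁻¹)) := by
  rw [Qf, map_sum, Finset.mul_sum, Pf]
  apply Finset.sum_congr rfl
  intro k _
  rw [map_mul, map_prod]
  have hconj : ∀ j ∈ univ.erase k,
      (starRingEnd ℂ) (1 - ζ j * ((starRingEnd ℂ) z)⁻¹) = 1 - (ζ j)⁻¹ * z⁻¹ := by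
    intro j _
    rw [map_sub, map_one, map_mul, map_inv₀, Complex.conj_conj,
      ← Complex.inv_eq_conj (hζ j)]
  rw [Finset.prod_congr rfl hconj, Complex.conj_ofReal, mul_assoc,
    refl_term ζ hζ k z hz]
  ring

lemma Qf_eq_Ff (htsum : (∑ k, t k) = 1) (z : ℂ) :
    Qf ζ t z = Ff ζ z + z * Pf ζ t z := by
  have hsum : (∑ k, (t k : ℂ)) = 1 := by
    rw [← Complex.ofReal_sum, htsum, Complex.ofReal_one]
  have h : Ff ζ z = ∑ k, (t k : ℂ) * Ff ζ z := by
    rw [← Finset.sum_mul, hsum, one_mul]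
  rw [Qf, Pf, h, Finset.mul_sum, ← Finset.sum_add_distrib]
  apply Finset.sum_congr rfl
  intro k _
  rw [Ff, ← Finset.prod_erase_mul univ _ (Finset.mem_univ k)]
  ring


open Polynomial in
noncomputable def Pp : ℂ[X] :=
  ∑ k, Polynomial.C ((t k : ℂ) * ζ k) *
    ∏ j ∈ univ.erase k, (1 - Polynomial.C (ζ j) * Polynomial.X)

open Polynomial in
lemma Pp_eval (z : ℂ) : (Pp ζ t).eval z = Pf ζ t z := by
  simp [Pp, Pf, eval_finset_sum, eval_prod]

lemma list_prod_map_eq {β : Type*} [CommMonoid β] (L : List ℂ) {m : ℕ} (hL : L.length = m)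
    (f : ℂ → β) :
    (L.map f).prod = ∏ k : Fin m, f (L.get (Fin.cast hL.symm k)) := by
  have h1 : (L.map f).prod = ∏ i : Fin L.length, f (L.get i) := by
    conv_lhs => rw [← List.ofFn_get L]
    rw [List.map_ofFn, List.prod_ofFn]
    rfl
  rw [h1]
  exact (Fin.prod_congr' _ hL.symm).symm

open Polynomial in
lemma Pf_factor (hζ : ∀ k, ‖ζ k‖ = 1) (htsum : (∑ k, t k) = 1) :
    ∃ b : Fin m → ℂ, (∀ k, Pf ζ t (b k) = 0) ∧
      ∀ z : ℂ, Pf ζ t z = ((-1)^m * ∏ j, ζ j) * ∏ k, (z - b k) := by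
  have hζ0 : ∀ j, ζ j ≠ 0 := fun j => by
    intro h; have := hζ j; rw [h] at this; simp at this
  have hcard : ∀ k : Fin (m+1), (univ.erase k).card = m := fun k => by
    rw [Finset.card_erase_of_mem (Finset.mem_univ k), Finset.card_univ, Fintype.card_fin]
    omega
  -- rewrite each factor product
  have hfactor : ∀ k : Fin (m+1),
      (∏ j ∈ univ.erase k, (1 - Polynomial.C (ζ j) * Polynomial.X) : ℂ[X])
      = Polynomial.C (∏ j ∈ univ.erase k, (-ζ j)) *
        ∏ j ∈ univ.erase k, (Polynomial.X - Polynomial.C (ζ j)⁻¹) := by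
    intro k
    rw [map_prod, ← Finset.prod_mul_distrib]
    apply Finset.prod_congr rfl
    intro j _
    rw [mul_sub, ← Polynomial.C_mul, neg_mul, mul_inv_cancel₀ (hζ0 j), map_neg, map_neg,
      Polynomial.C_1]
    ring
  have hMdeg : ∀ k : Fin (m+1),
      (∏ j ∈ univ.erase k, (Polynomial.X - Polynomial.C (ζ j)⁻¹) : ℂ[X]).natDegree = m := by
    intro k
    rw [Polynomial.natDegree_prod _ _ (fun j _ => Polynomial.X_sub_C_ne_zero _)]
    simp [Polynomial.natDegree_X_sub_C, hcard k]
  have hMmonic : ∀ k : Fin (m+1),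
      (∏ j ∈ univ.erase k, (Polynomial.X - Polynomial.C (ζ j)⁻¹) : ℂ[X]).Monic :=
    fun k => monic_prod_of_monic _ _ fun j _ => monic_X_sub_C _
  have hcoeff : (Pp ζ t).coeff m = (-1)^m * ∏ j, ζ j := by
    rw [Pp, finset_sum_coeff]
    have : ∀ k : Fin (m+1),
        (Polynomial.C ((t k : ℂ) * ζ k) *
          ∏ j ∈ univ.erase k, (1 - Polynomial.C (ζ j) * Polynomial.X)).coeff m
        = (t k : ℂ) * ζ k * ∏ j ∈ univ.erase k, (-ζ j) := by
      intro k
      rw [Polynomial.coeff_C_mul, hfactor k, Polynomial.coeff_C_mul,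
        show ((∏ j ∈ univ.erase k, (Polynomial.X - Polynomial.C (ζ j)⁻¹) : ℂ[X]).coeff m) = 1 from
          by have := (hMmonic k).coeff_natDegree; rwa [hMdeg k] at this, mul_one]
    rw [Finset.sum_congr rfl fun k _ => this k]
    have hterm : ∀ k : Fin (m+1),
        (t k : ℂ) * ζ k * ∏ j ∈ univ.erase k, (-ζ j)
        = (t k : ℂ) * ((-1)^m * ∏ j, ζ j) := by
      intro k
      have h1 : ∏ j ∈ univ.erase k, (-ζ j)
          = (-1)^m * ∏ j ∈ univ.erase k, ζ j := by
        have hc : ∀ j ∈ univ.erase k, -ζ j = (-1) * ζ j := fun j _ => by ring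
        rw [Finset.prod_congr rfl hc, Finset.prod_mul_distrib, Finset.prod_const, hcard k]
      rw [h1, ← Finset.prod_erase_mul univ ζ (Finset.mem_univ k)]
      ring
    rw [Finset.sum_congr rfl fun k _ => hterm k, ← Finset.sum_mul]
    have hsum : (∑ k, (t k : ℂ)) = 1 := by
      rw [← Complex.ofReal_sum, htsum, Complex.ofReal_one]
    rw [hsum, one_mul]
  have hC0 : ((-1:ℂ))^m * ∏ j, ζ j ≠ 0 :=
    mul_ne_zero (pow_ne_zero _ (by norm_num)) (Finset.prod_ne_zero_iff.mpr fun j _ => hζ0 j)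
  have hdegle : (Pp ζ t).natDegree ≤ m := by
    apply Polynomial.natDegree_sum_le_of_forall_le
    intro k _
    refine le_trans (Polynomial.natDegree_C_mul_le _ _) ?_
    rw [hfactor k]
    refine le_trans (Polynomial.natDegree_C_mul_le _ _) ?_
    rw [hMdeg k]
  have hPne : Pp ζ t ≠ 0 := fun h0 => hC0 (by rw [← hcoeff, h0, Polynomial.coeff_zero])
  have hdeg : (Pp ζ t).natDegree = m :=
    le_antisymm hdegle (Polynomial.le_natDegree_of_ne_zero (hcoeff ▸ hC0))
  have hlead : (Pp ζ t).leadingCoeff = (-1)^m * ∏ j, ζ j := by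
    rw [Polynomial.leadingCoeff, hdeg, hcoeff]
  have hroots : Multiset.card (Pp ζ t).roots = (Pp ζ t).natDegree :=
    Polynomial.splits_iff_card_roots.mp (IsAlgClosed.splits _)
  have hfac := Polynomial.C_leadingCoeff_mul_prod_multiset_X_sub_C (p := Pp ζ t) hroots
  set L := (Pp ζ t).roots.toList with hL
  have hLlen : L.length = m := by rw [hL, Multiset.length_toList, hroots, hdeg]
  refine ⟨fun k => L.get (Fin.cast hLlen.symm k), ?_, ?_⟩
  · intro k
    have hmem : L.get (Fin.cast hLlen.symm k) ∈ (Pp ζ t).roots := by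
      rw [← Multiset.mem_toList]; exact L.get_mem _
    have := Polynomial.isRoot_of_mem_roots hmem
    rw [← Pp_eval ζ t]; exact this
  · intro z
    rw [← Pp_eval ζ t, ← hfac, Polynomial.eval_mul, Polynomial.eval_C, hlead]
    congr 1
    rw [Polynomial.eval_multiset_prod, Multiset.map_map]
    have h2 : Multiset.map ((fun p => Polynomial.eval z p) ∘ fun a => Polynomial.X - Polynomial.C a)
          (Pp ζ t).roots = Multiset.map (fun a => z - a) (Pp ζ t).roots := by
      apply Multiset.map_congr rfl; intro a _; simp
    rw [h2, show (Pp ζ t).roots = (L : Multiset ℂ) from (Multiset.coe_toList _).symm,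
      Multiset.map_coe, Multiset.prod_coe]
    exact list_prod_map_eq L hLlen _

end Stmt6Aux

open Stmt6Aux

theorem stmt_6 {α : ℝ} (hα0 : 0 < α) (hα1 : α ≤ 1) {h : ℂ → ℂ} (hG : GClass α h)
    {φ : ℂ → ℂ} (hφa : AnalyticOnNhd ℂ φ (ball (0:ℂ) 1))
    (hφb : ∀ z ∈ ball (0:ℂ) 1, ‖φ z‖ ≤ 1)
    (hφh : ∀ z ∈ ball (0:ℂ) 1,
      deriv (deriv h) z * (z * φ z - 1) = (α : ℂ) * φ z * deriv h z)
    {m : ℕ} (hm : 1 ≤ m) (ζ : Fin (m + 1) → ℂ) (t : Fin (m + 1) → ℝ)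
    (hζinj : Function.Injective ζ) (hζ : ∀ k, ‖ζ k‖ = 1)
    (ht : ∀ k, 0 < t k ∧ t k < 1) (htsum : (∑ k, t k) = 1)
    (hh' : ∀ z ∈ ball (0:ℂ) 1,
      deriv h z = ∏ k, (1 - ζ k * z) ^ ((α * t k : ℝ) : ℂ)) :
    IsFiniteBlaschkeProduct m φ := by
  classical
  have hζ0 : ∀ j, ζ j ≠ 0 := fun j => by
    intro hj; have := hζ j; rw [hj] at this; simp at this
  have hαC : (α : ℂ) ≠ 0 := Complex.ofReal_ne_zero.mpr hα0.ne'
  -- membership/abs facts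
  have habs : ∀ z ∈ ball (0:ℂ) 1, ‖z‖ < 1 := by
    intro z hz; rwa [mem_ball_zero_iff] at hz
  have hne : ∀ z, ‖z‖ < 1 → ∀ k, (1 : ℂ) - ζ k * z ≠ 0 := by
    intro z hz k h0
    have h1 : ζ k * z = 1 := by linear_combination -h0
    have := congrArg (‖·‖) h1
    rw [norm_mul, hζ k, one_mul, norm_one] at this
    exact absurd this hz.ne
  have hslit : ∀ z, ‖z‖ < 1 → ∀ k, (1 : ℂ) - ζ k * z ∈ Complex.slitPlane := by
    intro z hz k
    left
    have h1 : ‖ζ k * z‖ < 1 := by rwa [norm_mul, hζ k, one_mul]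
    have h2 : (ζ k * z).re ≤ ‖ζ k * z‖ := Complex.re_le_norm _
    simp only [Complex.sub_re, Complex.one_re]
    linarith
  set g : ℂ → ℂ := fun z => ∏ k, (1 - ζ k * z) ^ ((α * t k : ℝ) : ℂ) with hgdef
  have hg0 : ∀ z, ‖z‖ < 1 → g z ≠ 0 := by
    intro z hz
    apply Finset.prod_ne_zero_iff.mpr
    intro k _ hk0
    exact hne z hz k (Complex.cpow_eq_zero_iff _ _ |>.mp hk0).1
  -- the key algebraic identity on the ball
  have hkey : ∀ z ∈ ball (0:ℂ) 1, φ z * Qf ζ t z = Pf ζ t z := by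
    intro z hz
    have hz1 := habs z hz
    -- derivative of each factor
    have hfd : ∀ k : Fin (m+1), HasDerivAt (fun w => (1 - ζ k * w) ^ ((α * t k : ℝ) : ℂ))
        (((α * t k : ℝ) : ℂ) * (1 - ζ k * z) ^ (((α * t k : ℝ) : ℂ) - 1) * (-ζ k)) z := by
      intro k
      have hb : HasDerivAt (fun w : ℂ => 1 - ζ k * w) (-ζ k) z := by
        simpa using ((hasDerivAt_id z).const_mul (ζ k)).const_sub 1
      exact hb.cpow_const (hslit z hz1 k)
    have hgd : HasDerivAt g (∑ k, (∏ j ∈ Finset.univ.erase k, (1 - ζ j * z) ^ ((α * t j : ℝ) : ℂ)) •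
        (((α * t k : ℝ) : ℂ) * (1 - ζ k * z) ^ (((α * t k : ℝ) : ℂ) - 1) * (-ζ k))) z :=
      HasDerivAt.fun_finsetProd (fun k _ => hfd k)
    set D : ℂ := ∑ k, (∏ j ∈ Finset.univ.erase k, (1 - ζ j * z) ^ ((α * t j : ℝ) : ℂ)) •
        (((α * t k : ℝ) : ℂ) * (1 - ζ k * z) ^ (((α * t k : ℝ) : ℂ) - 1) * (-ζ k)) with hDdef
    have hev : deriv h =ᶠ[nhds z] g :=
      Filter.eventuallyEq_of_mem (isOpen_ball.mem_nhds hz) hh'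
    have E1 : deriv (deriv h) z = D := by
      rw [hev.deriv_eq]; exact hgd.deriv
    have E3 : deriv h z = g z := hh' z hz
    -- multiply D by Ff
    have E2 : D * Ff ζ z = -(α : ℂ) * (g z * Pf ζ t z) := by
      rw [hDdef, Finset.sum_mul, Pf, Finset.mul_sum, Finset.mul_sum]
      apply Finset.sum_congr rfl
      intro k _
      have hcpow : (1 - ζ k * z) ^ (((α * t k : ℝ) : ℂ) - 1) * (1 - ζ k * z)
          = (1 - ζ k * z) ^ ((α * t k : ℝ) : ℂ) := by
        conv_rhs => rw [show ((α * t k : ℝ) : ℂ) = (((α * t k : ℝ) : ℂ) - 1) + 1 from by ring]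
        rw [Complex.cpow_add _ _ (hne z hz1 k), Complex.cpow_one]
      have hF : Ff ζ z = (∏ j ∈ Finset.univ.erase k, (1 - ζ j * z)) * (1 - ζ k * z) := by
        rw [Ff, Finset.prod_erase_mul _ _ (Finset.mem_univ k)]
      have hgsplit : (∏ j ∈ Finset.univ.erase k, (1 - ζ j * z) ^ ((α * t j : ℝ) : ℂ)) *
          (1 - ζ k * z) ^ ((α * t k : ℝ) : ℂ) = g z := by
        rw [hgdef]; exact Finset.prod_erase_mul _ _ (Finset.mem_univ k)
      rw [smul_eq_mul, hF]
      calc (∏ j ∈ Finset.univ.erase k, (1 - ζ j * z) ^ ((α * t j : ℝ) : ℂ)) *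
            (((α * t k : ℝ) : ℂ) * (1 - ζ k * z) ^ (((α * t k : ℝ) : ℂ) - 1) * (-ζ k)) *
            ((∏ j ∈ Finset.univ.erase k, (1 - ζ j * z)) * (1 - ζ k * z))
          = ((∏ j ∈ Finset.univ.erase k, (1 - ζ j * z) ^ ((α * t j : ℝ) : ℂ)) *
              ((1 - ζ k * z) ^ (((α * t k : ℝ) : ℂ) - 1) * (1 - ζ k * z))) *
            (((α * t k : ℝ) : ℂ) * (-ζ k) * ∏ j ∈ Finset.univ.erase k, (1 - ζ j * z)) := by
            ring
        _ = g z * (((α * t k : ℝ) : ℂ) * (-ζ k) * ∏ j ∈ Finset.univ.erase k, (1 - ζ j * z)) := by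
            rw [hcpow, hgsplit]
        _ = -(α:ℂ) * (g z * ((t k : ℂ) * ζ k * ∏ j ∈ Finset.univ.erase k, (1 - ζ j * z))) := by
            push_cast
            ring
    have E4 := hφh z hz
    rw [E1, E3] at E4
    have h4' := congrArg (· * Ff ζ z) E4
    rw [show D * (z * φ z - 1) * Ff ζ z = (D * Ff ζ z) * (z * φ z - 1) from by ring,
      E2] at h4'
    have hQ : Qf ζ t z = Ff ζ z + z * Pf ζ t z := Qf_eq_Ff ζ t htsum z
    apply mul_left_cancel₀ (mul_ne_zero hαC (hg0 z hz1))
    rw [hQ]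
    linear_combination -h4'
  -- polynomial factorization
  obtain ⟨b, hbroot, hbfac⟩ := Stmt6Aux.Pf_factor ζ t hζ htsum
  have hQne := Stmt6Aux.Qf_ne_zero ζ t hζ hζinj (fun k => (ht k).1) htsum
  have hC0ne : ((-1:ℂ))^m * ∏ j, ζ j ≠ 0 :=
    mul_ne_zero (pow_ne_zero _ (by norm_num)) (Finset.prod_ne_zero_iff.mpr fun j _ => hζ0 j)
  -- all roots lie in the open unit ball
  have hbball : ∀ k, b k ∈ ball (0:ℂ) 1 := by
    intro k
    rw [mem_ball_zero_iff]
    by_contra hk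
    push_neg at hk
    have hbne : b k ≠ 0 := by
      intro h0
      rw [h0, norm_zero] at hk
      linarith
    have hrefl := Stmt6Aux.refl_id ζ t hζ (b k) hbne
    rw [hbroot k] at hrefl
    have hw : ‖((starRingEnd ℂ) (b k))⁻¹‖ ≤ 1 := by
      rw [norm_inv, Complex.norm_conj]
      exact inv_le_one_of_one_le₀ hk
    apply hQne _ hw
    have hprod : (((-1:ℂ))^m * ∏ j, ζ j) * (b k)^m ≠ 0 :=
      mul_ne_zero hC0ne (pow_ne_zero _ hbne)
    have h2 := (mul_eq_zero.mp hrefl.symm).resolve_left hprod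
    have h3 := congrArg (starRingEnd ℂ) h2
    rwa [Complex.conj_conj, map_zero] at h3
  -- factorization of Qf on the closed ball
  have hsum1 : Qf ζ t 0 = 1 := by
    have hsum : (∑ k, (t k : ℂ)) = 1 := by
      rw [← Complex.ofReal_sum, htsum, Complex.ofReal_one]
    simp only [Stmt6Aux.Qf, mul_zero, sub_zero, Finset.prod_const_one, mul_one]
    exact hsum
  have hQfac : ∀ z : ℂ, Qf ζ t z = ∏ k, (1 - (starRingEnd ℂ) (b k) * z) := by
    intro z
    by_cases hz0 : z = 0
    · rw [hz0, hsum1]; simp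
    · have hcz : (starRingEnd ℂ) z ≠ 0 := by simpa using hz0
      set w := ((starRingEnd ℂ) z)⁻¹ with hwdef
      have hw0 : w ≠ 0 := inv_ne_zero hcz
      have hrefl := Stmt6Aux.refl_id ζ t hζ w hw0
      have hwz : ((starRingEnd ℂ) w)⁻¹ = z := by
        rw [hwdef, map_inv₀, Complex.conj_conj, inv_inv]
      rw [hwz, hbfac w] at hrefl
      have hwm : (w:ℂ)^m ≠ 0 := pow_ne_zero _ hw0
      have hconj : (starRingEnd ℂ) (Qf ζ t z) = ∏ k, (1 - b k * (starRingEnd ℂ) z) := by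
        have hinv : (starRingEnd ℂ) z = w⁻¹ := by rw [hwdef, inv_inv]
        have hsplit : ∏ k : Fin m, (w - b k) = w^m * ∏ k, (1 - b k * (starRingEnd ℂ) z) := by
          have hterm : ∀ k : Fin m, w - b k = w * (1 - b k * (starRingEnd ℂ) z) := by
            intro k
            rw [hinv]
            field_simp
          rw [Finset.prod_congr rfl (fun k _ => hterm k), Finset.prod_mul_distrib,
            Finset.prod_const, Finset.card_univ, Fintype.card_fin]
        apply mul_left_cancel₀ (mul_ne_zero hC0ne hwm)
        rw [show (((-1:ℂ))^m * ∏ j, ζ j) * w^m * ((starRingEnd ℂ) (Qf ζ t z))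
            = ((-1:ℂ))^m * (∏ j, ζ j) * w^m * (starRingEnd ℂ) (Qf ζ t z) from by ring,
          ← hrefl, hsplit]
        ring
      have hcc := congrArg (starRingEnd ℂ) hconj
      rw [Complex.conj_conj, map_prod] at hcc
      rw [hcc]
      apply Finset.prod_congr rfl
      intro k _
      rw [map_sub, map_one, map_mul, Complex.conj_conj]
  -- assemble
  refine ⟨((-1:ℂ))^m * ∏ j, ζ j, b, ?_, hbball, ?_⟩
  · rw [norm_mul, norm_pow, norm_prod]
    simp [hζ]
  · intro z hz
    have hz1 := habs z hz
    have hφz : φ z = Pf ζ t z / Qf ζ t z := (eq_div_iff (hQne z hz1.le)).mpr (hkey z hz)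
    rw [hφz, hbfac z, hQfac z, mul_div_assoc, ← Finset.prod_div_distrib]
end

section
/- Let φ(z) = ∏_{k=1}^{m} (z − b_k)/(1 − conj(b_k)·z) be a finite Blaschke product of degree m ≥ 1 with b₁, …, b_m in the open unit disk 𝔻. Then there exist m + 1 pairwise distinct points z₁, …, z_{m+1} on the unit circle with z_k·φ(z_k) = 1 for each k, and real numbers t₁, …, t_{m+1} with 0 < t_k < 1 and t₁ + ⋯ + t_{m+1} = 1, such that φ(z)/(z·φ(z) − 1) = ∑_{k=1}^{m+1} t_k/(z − z_k) for all z ∈ 𝔻. -/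
open Complex Metric Polynomial Finset

/-- The finite Blaschke product with zeros `b 0, …, b (m-1)` (and unimodular constant `1`). -/
noncomputable def blaschkeProd {m : ℕ} (b : Fin m → ℂ) : ℂ → ℂ :=
  fun z => ∏ k, (z - b k) / (1 - (starRingEnd ℂ) (b k) * z)

namespace Stmt7Aux

lemma lemA (z b : ℂ) :
    normSq (1 - (starRingEnd ℂ) b * z) - normSq (z - b) = (1 - normSq b) * (1 - normSq z) := by
  simp [Complex.normSq_apply, Complex.mul_re, Complex.mul_im]; ring

lemma lemB1 {z b : ℂ} (hz : ‖z‖ < 1) (hb : ‖b‖ < 1) :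
    ‖z - b‖ < ‖1 - (starRingEnd ℂ) b * z‖ := by
  have h := lemA z b
  have h1 : normSq b < 1 := by rw [← Complex.sq_norm]; nlinarith [norm_nonneg b]
  have h2 : normSq z < 1 := by rw [← Complex.sq_norm]; nlinarith [norm_nonneg z]
  have : normSq (z - b) < normSq (1 - (starRingEnd ℂ) b * z) := by nlinarith
  refine lt_of_pow_lt_pow_left₀ 2 (norm_nonneg _) ?_
  rwa [Complex.sq_norm, Complex.sq_norm]

lemma lemB2 {z b : ℂ} (hz : 1 < ‖z‖) (hb : ‖b‖ < 1) :
    ‖1 - (starRingEnd ℂ) b * z‖ < ‖z - b‖ := by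
  have h := lemA z b
  have h1 : normSq b < 1 := by rw [← Complex.sq_norm]; nlinarith [norm_nonneg b]
  have h2 : 1 < normSq z := by rw [← Complex.sq_norm]; nlinarith
  have : normSq (1 - (starRingEnd ℂ) b * z) < normSq (z - b) := by nlinarith
  refine lt_of_pow_lt_pow_left₀ 2 (norm_nonneg _) ?_
  rwa [Complex.sq_norm, Complex.sq_norm]

lemma lemC0 {z b c u : ℂ} (hu : z * u = 1) (hzb : z - b ≠ 0) (hd : 1 - c * z ≠ 0) :
    z/(z-b) + z*c/(1-c*z) = (1 - b * c)/((z-b)*(u - c)) := by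
  have hz0 : z ≠ 0 := by intro h; rw [h] at hu; simp at hu
  have h1 : u - c = u * (1 - c * z) := by linear_combination c * hu
  rw [h1]
  have hu0 : u ≠ 0 := by intro h; rw [h] at hu; simp at hu
  rw [div_add_div _ _ hzb hd, div_eq_div_iff (mul_ne_zero hzb hd)
    (mul_ne_zero hzb (mul_ne_zero hu0 hd))]
  linear_combination ((1-b*c)*(z-b)*(1-c*z)) * hu

/-- per-term identity on the circle -/
lemma lemC {z b : ℂ} (hz : ‖z‖ = 1) (hb : ‖b‖ < 1) :
    z/(z-b) + z*(starRingEnd ℂ) b/(1-(starRingEnd ℂ) b*z)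
      = (((1 - normSq b)/normSq (z - b) : ℝ) : ℂ) := by
  have hu : z * (starRingEnd ℂ) z = 1 := by
    rw [Complex.mul_conj]; norm_cast; rw [← Complex.sq_norm, hz]; norm_num
  have hzb : z - b ≠ 0 := by
    intro h; rw [sub_eq_zero] at h; rw [h] at hz; exact absurd hz (ne_of_lt hb)
  have hd : (1 : ℂ) - (starRingEnd ℂ) b * z ≠ 0 := by
    intro h
    have h2 : ‖(starRingEnd ℂ) b * z‖ = 1 := by
      have : (starRingEnd ℂ) b * z = 1 := by linear_combination -h
      rw [this]; simp
    rw [norm_mul, Complex.norm_conj, hz, mul_one] at h2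
    exact absurd h2 (ne_of_lt hb)
  rw [lemC0 hu hzb hd]
  have e1 : ((1 - normSq b : ℝ) : ℂ) = 1 - b * (starRingEnd ℂ) b := by
    push_cast [← Complex.mul_conj b]; ring
  have e2 : ((normSq (z - b) : ℝ) : ℂ)
      = (z - b) * ((starRingEnd ℂ) z - (starRingEnd ℂ) b) := by
    rw [← Complex.mul_conj (z - b), map_sub]
  rw [Complex.ofReal_div, e1, e2]

lemma deriv_finprod {ι : Type*} [DecidableEq ι] (s : Finset ι) (f : ι → ℂ[X]) :
    Polynomial.derivative (∏ i ∈ s, f i)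
      = ∑ i ∈ s, (∏ j ∈ s.erase i, f j) * Polynomial.derivative (f i) := by
  induction s using Finset.induction_on with
  | empty => simp
  | @insert a s ha ih =>
    have hsum : ∑ i ∈ s, (∏ j ∈ (insert a s).erase i, f j) * Polynomial.derivative (f i)
        = f a * ∑ i ∈ s, (∏ j ∈ s.erase i, f j) * Polynomial.derivative (f i) := by
      rw [Finset.mul_sum]
      refine Finset.sum_congr rfl fun i hi => ?_
      rw [Finset.erase_insert_of_ne (by rintro rfl; exact ha hi),
        Finset.prod_insert (fun h => ha (Finset.mem_of_mem_erase h))]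
      ring
    rw [Finset.prod_insert ha, Polynomial.derivative_mul, ih, Finset.sum_insert ha,
      Finset.erase_insert ha, hsum]
    ring

end Stmt7Aux

theorem stmt_7 {m : ℕ} (hm : 1 ≤ m) (b : Fin m → ℂ) (hb : ∀ k, b k ∈ ball (0:ℂ) 1) :
    ∃ (zk : Fin (m + 1) → ℂ) (t : Fin (m + 1) → ℝ),
      Function.Injective zk ∧ (∀ k, ‖zk k‖ = 1) ∧
      (∀ k, zk k * blaschkeProd b (zk k) = 1) ∧
      (∀ k, 0 < t k ∧ t k < 1) ∧ (∑ k, t k) = 1 ∧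
      ∀ z ∈ ball (0:ℂ) 1,
        blaschkeProd b z / (z * blaschkeProd b z - 1) =
          ∑ k, (t k : ℂ) / (z - zk k) := by
  classical
  open Stmt7Aux in
  have hb' : ∀ k, ‖b k‖ < 1 := by
    intro k; have := hb k; rwa [mem_ball, Complex.dist_eq, sub_zero] at this
  set P : ℂ[X] := ∏ k, (X - C (b k)) with hPdef
  set Q : ℂ[X] := ∏ k, (1 - C ((starRingEnd ℂ) (b k)) * X) with hQdef
  set R : ℂ[X] := X * P - Q with hRdef
  have hPe : ∀ z, P.eval z = ∏ k, (z - b k) := by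
    intro z; simp [hPdef, eval_prod]
  have hQe : ∀ z, Q.eval z = ∏ k, (1 - (starRingEnd ℂ) (b k) * z) := by
    intro z; simp [hQdef, eval_prod]
  have hRe : ∀ z, R.eval z = z * P.eval z - Q.eval z := by
    intro z; simp [hRdef]
  -- degrees
  have hPm : P.Monic := monic_prod_of_monic _ _ fun k _ => monic_X_sub_C _
  have hPdeg : P.natDegree = m := by
    rw [hPdef, natDegree_prod _ _ fun k _ => X_sub_C_ne_zero _]
    simp [natDegree_X_sub_C]
  have hQdeg : Q.degree ≤ (m : ℕ) := by
    refine le_trans (degree_prod_le _ _) ?_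
    have h1 : ∀ k : Fin m, ((1 : ℂ[X]) - C ((starRingEnd ℂ) (b k)) * X).degree ≤ 1 := by
      intro k
      refine le_trans (degree_sub_le _ _) (max_le ?_ ?_)
      · rw [Polynomial.degree_one]; norm_num
      · exact Polynomial.degree_C_mul_X_le _
    refine le_trans (Finset.sum_le_sum fun k (_ : k ∈ Finset.univ) => h1 k) ?_
    simp [Finset.sum_const, Finset.card_univ]
  have hXPm : (X * P).Monic := monic_X.mul hPm
  have hXPdeg : (X * P).degree = ((m + 1 : ℕ) : WithBot ℕ) := by
    rw [degree_mul, degree_X, degree_eq_natDegree hPm.ne_zero, hPdeg]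
    norm_cast
    omega
  have hQlt : (-Q).degree < (X * P).degree := by
    rw [degree_neg, hXPdeg]
    exact lt_of_le_of_lt hQdeg (by exact_mod_cast Nat.lt_succ_self m)
  have hRm : R.Monic := by
    rw [hRdef, sub_eq_add_neg]
    exact hXPm.add_of_left hQlt
  have hRdeg : R.natDegree = m + 1 := by
    have : R.degree = ((m + 1 : ℕ) : WithBot ℕ) := by
      rw [hRdef, sub_eq_add_neg, degree_add_eq_left_of_degree_lt hQlt, hXPdeg]
    exact natDegree_eq_of_degree_eq_some this
  have hR0 : R ≠ 0 := hRm.ne_zero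
  -- nonvanishing facts
  have hQne : ∀ z, ‖z‖ < 1 → Q.eval z ≠ 0 := by
    intro z hz
    rw [hQe]
    refine Finset.prod_ne_zero_iff.mpr fun k _ => ?_
    intro h
    have := lemB1 hz (hb' k)
    rw [h] at this
    simp at this
    exact absurd this (not_lt.mpr (norm_nonneg _))
  have hPne : ∀ z, ‖z‖ = 1 → P.eval z ≠ 0 := by
    intro z hz
    rw [hPe]
    refine Finset.prod_ne_zero_iff.mpr fun k _ => ?_
    intro h
    rw [sub_eq_zero] at h
    rw [h] at hz
    exact absurd hz (ne_of_lt (hb' k))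
  -- all roots of R are on the unit circle
  have hroot1 : ∀ z, R.IsRoot z → ‖z‖ = 1 := by
    intro z hz
    have heq : z * P.eval z = Q.eval z := by
      have h0 := hz
      rw [IsRoot, hRe, sub_eq_zero] at h0
      exact h0
    by_contra h
    rcases lt_or_gt_of_ne h with hlt | hgt
    · -- |z| < 1
      have hQz := hQne z hlt
      have hQpos : 0 < ‖Q.eval z‖ := by
        simpa [norm_pos_iff] using hQz
      have hstep : ‖z * P.eval z‖ < ‖Q.eval z‖ := by
        rw [norm_mul, hPe, hQe, norm_prod, norm_prod]
        by_cases hP0 : ∏ k, ‖z - b k‖ = 0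
        · rw [hP0, mul_zero]
          rwa [hQe, norm_prod] at hQpos
        · have hApos : 0 < ∏ k, ‖z - b k‖ := by
            rcases (Finset.prod_nonneg fun k _ => norm_nonneg (z - b k)).lt_or_eq with h' | h'
            · exact h'
            · exact absurd h'.symm hP0
          calc ‖z‖ * ∏ k, ‖z - b k‖
              < ∏ k, ‖z - b k‖ := mul_lt_of_lt_one_left hApos hlt
            _ ≤ ∏ k, ‖1 - (starRingEnd ℂ) (b k) * z‖ :=
                Finset.prod_le_prod (fun k _ => norm_nonneg _)
                  (fun k _ => (lemB1 hlt (hb' k)).le)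
      rw [heq] at hstep
      exact lt_irrefl _ hstep
    · -- |z| > 1
      have hPz : ∀ k : Fin m, z - b k ≠ 0 := by
        intro k h
        rw [sub_eq_zero] at h
        rw [h] at hgt
        exact absurd (hb' k) (not_lt.mpr hgt.le)
      have hApos : 0 < ∏ k, ‖z - b k‖ := by
        refine Finset.prod_pos fun k _ => ?_
        simpa [norm_pos_iff] using hPz k
      have hstep : ‖Q.eval z‖ < ‖z * P.eval z‖ := by
        rw [norm_mul, hPe, hQe, norm_prod, norm_prod]
        calc ∏ k, ‖1 - (starRingEnd ℂ) (b k) * z‖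
            ≤ ∏ k, ‖z - b k‖ :=
              Finset.prod_le_prod (fun k _ => norm_nonneg _)
                (fun k _ => (lemB2 hgt (hb' k)).le)
          _ < ‖z‖ * ∏ k, ‖z - b k‖ :=
              lt_mul_of_one_lt_left hApos hgt
      rw [heq] at hstep
      exact lt_irrefl _ hstep
  -- roots
  have hcardroots : Multiset.card R.roots = m + 1 := by
    rw [← hRdeg]
    exact Polynomial.splits_iff_card_roots.mp (IsAlgClosed.splits R)
  -- derivative of R
  have hR' : Polynomial.derivative R = P + X * Polynomial.derivative P - Polynomial.derivative Q := by
    rw [hRdef, derivative_sub, derivative_mul, derivative_X, one_mul]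
  have hP' : Polynomial.derivative P = ∑ k, ∏ j ∈ Finset.univ.erase k, (X - C (b j)) := by
    rw [hPdef, Stmt7Aux.deriv_finprod]
    simp [Polynomial.derivative_X_sub_C]
  have hQ' : Polynomial.derivative Q
      = ∑ k, (∏ j ∈ Finset.univ.erase k, (1 - C ((starRingEnd ℂ) (b j)) * X))
          * (- C ((starRingEnd ℂ) (b k))) := by
    rw [hQdef, Stmt7Aux.deriv_finprod]
    refine Finset.sum_congr rfl fun k _ => ?_
    rw [derivative_sub, derivative_one, derivative_C_mul_X, zero_sub]
  have hDkey : ∀ z₀, ‖z₀‖ = 1 → R.IsRoot z₀ →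
      (Polynomial.derivative R).eval z₀
        = P.eval z₀ * (((1 + ∑ k, (1 - normSq (b k)) / normSq (z₀ - b k) : ℝ)) : ℂ) := by
    intro z₀ habs hroot
    have hQP : Q.eval z₀ = z₀ * P.eval z₀ := by
      have h0 := hroot
      rw [IsRoot, hRe, sub_eq_zero] at h0
      exact h0.symm
    have hzb : ∀ k : Fin m, z₀ - b k ≠ 0 := by
      intro k h
      rw [sub_eq_zero] at h
      rw [h] at habs
      exact absurd habs (ne_of_lt (hb' k))
    have hcz : ∀ k : Fin m, (1:ℂ) - (starRingEnd ℂ) (b k) * z₀ ≠ 0 := by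
      intro k h
      have h2 : ‖(starRingEnd ℂ) (b k) * z₀‖ = 1 := by
        have : (starRingEnd ℂ) (b k) * z₀ = 1 := by linear_combination -h
        rw [this]; simp
      rw [norm_mul, Complex.norm_conj, habs, mul_one] at h2
      exact absurd h2 (ne_of_lt (hb' k))
    have hPz := hPne z₀ habs
    have e1 : (Polynomial.derivative P).eval z₀ = ∑ k, (P.eval z₀) * (z₀ - b k)⁻¹ := by
      rw [hP', eval_finset_sum]
      refine Finset.sum_congr rfl fun k _ => ?_
      rw [eval_prod]
      simp only [eval_sub, eval_X, eval_C]
      have hme := Finset.mul_prod_erase Finset.univ (fun j => z₀ - b j) (Finset.mem_univ k)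
      rw [hPe, ← hme, mul_comm (z₀ - b k), mul_assoc, mul_inv_cancel₀ (hzb k), mul_one]
    have e2 : (Polynomial.derivative Q).eval z₀
        = ∑ k, -(starRingEnd ℂ) (b k) * (Q.eval z₀ * (1 - (starRingEnd ℂ) (b k) * z₀)⁻¹) := by
      rw [hQ', eval_finset_sum]
      refine Finset.sum_congr rfl fun k _ => ?_
      rw [eval_mul, eval_prod]
      simp only [eval_sub, eval_one, eval_mul, eval_C, eval_X, eval_neg]
      have hme := Finset.mul_prod_erase Finset.univ
        (fun j => 1 - (starRingEnd ℂ) (b j) * z₀) (Finset.mem_univ k)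
      rw [hQe, ← hme, mul_comm ((1:ℂ) - (starRingEnd ℂ) (b k) * z₀), mul_assoc,
        mul_inv_cancel₀ (hcz k), mul_one]
      ring
    have hterm : ∀ k : Fin m,
        z₀ * (P.eval z₀ * (z₀ - b k)⁻¹)
          - (-(starRingEnd ℂ) (b k) * (z₀ * P.eval z₀ * (1 - (starRingEnd ℂ) (b k) * z₀)⁻¹))
        = P.eval z₀ * ((((1 - normSq (b k))/normSq (z₀ - b k) : ℝ)) : ℂ) := by
      intro k
      rw [← Stmt7Aux.lemC habs (hb' k)]
      field_simp
      ring
    rw [hR', eval_sub, eval_add, eval_mul, eval_X, e1, e2, hQP, Finset.mul_sum,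
      add_sub_assoc, ← Finset.sum_sub_distrib]
    rw [Complex.ofReal_add, Complex.ofReal_one, Complex.ofReal_sum]
    rw [mul_add, mul_one, Finset.mul_sum]
    congr 1
    refine Finset.sum_congr rfl fun k _ => ?_
    rw [← hterm k]
  have hFinNe : Nonempty (Fin m) := ⟨⟨0, hm⟩⟩
  have hDpos : ∀ z₀ : ℂ, ‖z₀‖ = 1 →
      1 < 1 + ∑ k, (1 - normSq (b k)) / normSq (z₀ - b k) := by
    intro z₀ habs
    have hpos : 0 < ∑ k, (1 - normSq (b k)) / normSq (z₀ - b k) := by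
      refine Finset.sum_pos (fun k _ => ?_) Finset.univ_nonempty
      refine div_pos ?_ ?_
      · have : normSq (b k) < 1 := by
          rw [← Complex.sq_norm]; nlinarith [hb' k, norm_nonneg (b k)]
        linarith
      · rw [Complex.normSq_pos, sub_ne_zero]
        intro h
        rw [h] at habs
        exact absurd habs (ne_of_lt (hb' k))
    linarith
  have hRderiv_ne : ∀ z₀, R.IsRoot z₀ → (Polynomial.derivative R).eval z₀ ≠ 0 := by
    intro z₀ h
    have habs := hroot1 z₀ h
    rw [hDkey z₀ habs h]
    refine mul_ne_zero (hPne z₀ habs) ?_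
    rw [Complex.ofReal_ne_zero]
    have := hDpos z₀ habs
    linarith
  have hnodup : R.roots.Nodup := by
    rw [Multiset.nodup_iff_count_le_one]
    intro z
    rw [count_roots]
    by_cases hz : R.IsRoot z
    · by_contra hc
      push_neg at hc
      have h2 := (one_lt_rootMultiplicity_iff_isRoot hR0).mp hc
      exact hRderiv_ne z hz h2.2
    · rw [rootMultiplicity_eq_zero hz]
      exact zero_le_one
  have hcardFin : R.roots.toFinset.card = m + 1 := by
    rw [Multiset.toFinset_card_of_nodup hnodup, hcardroots]
  have hcard' : Fintype.card {x // x ∈ R.roots.toFinset} = m + 1 := by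
    rw [Fintype.card_coe]; exact hcardFin
  set e : {x // x ∈ R.roots.toFinset} ≃ Fin (m + 1) := Fintype.equivFinOfCardEq hcard' with he
  set zk : Fin (m + 1) → ℂ := fun k => ((e.symm k : {x // x ∈ R.roots.toFinset}) : ℂ) with hzk
  have hzkinj : Function.Injective zk := fun i j h => e.symm.injective (Subtype.ext h)
  have hzkmem : ∀ k, R.IsRoot (zk k) := by
    intro k
    have h2 := (e.symm k).2
    rw [Multiset.mem_toFinset, Polynomial.mem_roots hR0] at h2
    exact h2
  have habs1 : ∀ k, ‖zk k‖ = 1 := fun k => hroot1 _ (hzkmem k)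
  have hRfact : R = ∏ k, (X - C (zk k)) := by
    calc R = (R.roots.map fun a => X - C a).prod :=
          (prod_multiset_X_sub_C_of_monic_of_roots_card_eq hRm (by rw [hcardroots, hRdeg])).symm
      _ = ∏ x ∈ R.roots.toFinset, (X - C x) := by
          rw [Finset.prod_eq_multiset_prod, Multiset.toFinset_val,
            Multiset.dedup_eq_self.mpr hnodup]
      _ = ∏ x : {x // x ∈ R.roots.toFinset}, (X - C (x : ℂ)) :=
          (Finset.prod_coe_sort _ _).symm
      _ = ∏ k, (X - C (zk k)) := (Equiv.prod_comp e.symm _).symm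
  have hReval : ∀ z, R.eval z = ∏ k, (z - zk k) := by
    intro z
    have h2 := congrArg (eval z) hRfact
    simpa [eval_prod] using h2
  have hderiv_at : ∀ k, (Polynomial.derivative R).eval (zk k)
      = ∏ j ∈ Finset.univ.erase k, (zk k - zk j) := by
    intro k
    conv_lhs => rw [hRfact]
    rw [Stmt7Aux.deriv_finprod, eval_finset_sum]
    rw [Finset.sum_eq_single k]
    · simp [eval_prod]
    · intro i _ hik
      simp only [Polynomial.derivative_X_sub_C, mul_one, eval_prod, eval_sub, eval_X, eval_C,
        eval_mul, eval_one]
      exact Finset.prod_eq_zero (Finset.mem_erase.mpr ⟨Ne.symm hik, Finset.mem_univ k⟩)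
        (sub_self _)
    · intro h
      exact absurd (Finset.mem_univ k) h
  -- the weights
  set t : Fin (m + 1) → ℝ :=
    fun k => (1 + ∑ j, (1 - normSq (b j)) / normSq (zk k - b j))⁻¹ with ht
  have ht01 : ∀ k, 0 < t k ∧ t k < 1 := by
    intro k
    have hD := hDpos (zk k) (habs1 k)
    constructor
    · exact inv_pos.mpr (by linarith)
    · rw [ht]
      exact inv_lt_one_of_one_lt₀ hD
  have htne : ∀ k, (1 + ∑ j, (1 - normSq (b j)) / normSq (zk k - b j)) ≠ 0 := by
    intro k
    have hD := hDpos (zk k) (habs1 k)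
    linarith
  have hprod_erase : ∀ k, ∏ j ∈ Finset.univ.erase k, (zk k - zk j)
      = P.eval (zk k) * (((1 + ∑ j, (1 - normSq (b j)) / normSq (zk k - b j) : ℝ)) : ℂ) := by
    intro k
    rw [← hderiv_at k, hDkey (zk k) (habs1 k) (hzkmem k)]
  have htC : ∀ k, (t k : ℂ) * ∏ j ∈ Finset.univ.erase k, (zk k - zk j) = P.eval (zk k) := by
    intro k
    have hne : (((1 + ∑ j, (1 - normSq (b j)) / normSq (zk k - b j) : ℝ)) : ℂ) ≠ 0 :=
      Complex.ofReal_ne_zero.mpr (htne k)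
    rw [hprod_erase k, ht, Complex.ofReal_inv, ← mul_assoc,
      mul_comm ((((1 + ∑ j, (1 - normSq (b j)) / normSq (zk k - b j) : ℝ)) : ℂ))⁻¹, mul_assoc,
      inv_mul_cancel₀ hne, mul_one]
  set S : ℂ[X] := ∑ k, C ((t k : ℂ)) * ∏ j ∈ Finset.univ.erase k, (X - C (zk j)) with hS
  have hSeval : ∀ z, S.eval z
      = ∑ k, (t k : ℂ) * ∏ j ∈ Finset.univ.erase k, (z - zk j) := by
    intro z
    rw [hS, eval_finset_sum]
    refine Finset.sum_congr rfl fun k _ => ?_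
    rw [eval_mul, eval_C, eval_prod]
    simp
  have hSat : ∀ i, S.eval (zk i) = P.eval (zk i) := by
    intro i
    rw [hSeval]
    rw [Finset.sum_eq_single i]
    · exact htC i
    · intro k _ hki
      refine mul_eq_zero_of_right _ ?_
      exact Finset.prod_eq_zero (Finset.mem_erase.mpr ⟨Ne.symm hki, Finset.mem_univ i⟩)
        (sub_self _)
    · intro h
      exact absurd (Finset.mem_univ i) h
  have hPS : P = S := by
    have hSdeg : S.natDegree ≤ m := by
      rw [hS]
      refine Polynomial.natDegree_sum_le_of_forall_le _ _ fun k _ => ?_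
      refine le_trans (natDegree_C_mul_le _ _) ?_
      rw [natDegree_prod _ _ fun j _ => X_sub_C_ne_zero _]
      simp [natDegree_X_sub_C, Finset.card_erase_of_mem]
    have hsub : P - S = 0 := by
      refine eq_zero_of_natDegree_lt_card_of_eval_eq_zero (P - S) hzkinj
        (fun i => by rw [eval_sub, hSat i, sub_self]) ?_
      have : (P - S).natDegree ≤ m := le_trans (natDegree_sub_le _ _) (by
        rw [hPdeg]; exact max_le le_rfl hSdeg)
      rw [Fintype.card_fin]
      omega
    exact sub_eq_zero.mp hsub
  have hsumt : ∑ k, t k = 1 := by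
    have hC : (∑ k, (t k : ℂ)) = 1 := by
      have h1 : P.coeff m = 1 := by
        have h2 := hPm.coeff_natDegree
        rwa [hPdeg] at h2
      have h2 : S.coeff m = ∑ k, (t k : ℂ) := by
        rw [hS, finset_sum_coeff]
        refine Finset.sum_congr rfl fun k _ => ?_
        rw [coeff_C_mul]
        have hmon : (∏ j ∈ Finset.univ.erase k, (X - C (zk j))).Monic :=
          monic_prod_of_monic _ _ fun _ _ => monic_X_sub_C _
        have hdeg : (∏ j ∈ Finset.univ.erase k, (X - C (zk j))).natDegree = m := by
          rw [natDegree_prod _ _ fun j _ => X_sub_C_ne_zero _]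
          simp [natDegree_X_sub_C, Finset.card_erase_of_mem]
        have h5 := hmon.coeff_natDegree
        rw [hdeg] at h5
        rw [h5, mul_one]
      calc ∑ k, (t k : ℂ) = S.coeff m := h2.symm
        _ = P.coeff m := (congrArg (fun p : ℂ[X] => p.coeff m) hPS).symm
        _ = 1 := h1
    have h3 : ((∑ k, t k : ℝ) : ℂ) = 1 := by push_cast; exact hC
    exact_mod_cast h3
  have hblas : ∀ z, blaschkeProd b z = P.eval z / Q.eval z := by
    intro z
    rw [hPe, hQe, blaschkeProd, ← Finset.prod_div_distrib]
  have hcirc : ∀ k, zk k * blaschkeProd b (zk k) = 1 := by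
    intro k
    have hQP : Q.eval (zk k) = zk k * P.eval (zk k) := by
      have h0 := hzkmem k
      rw [IsRoot, hRe, sub_eq_zero] at h0
      exact h0.symm
    have hz0 : zk k ≠ 0 := by
      intro h
      have := habs1 k
      rw [h] at this
      simp at this
    rw [hblas, hQP]
    field_simp [hPne _ (habs1 k)]
  refine ⟨zk, t, hzkinj, habs1, hcirc, ht01, hsumt, ?_⟩
  intro z hzball
  have hzlt : ‖z‖ < 1 := by
    rwa [mem_ball, Complex.dist_eq, sub_zero] at hzball
  have hQz := hQne z hzlt
  have hzne : ∀ k, z - zk k ≠ 0 := by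
    intro k h
    rw [sub_eq_zero] at h
    rw [h, habs1 k] at hzlt
    exact lt_irrefl 1 hzlt
  have hRz : R.eval z ≠ 0 := by
    rw [hReval]
    exact Finset.prod_ne_zero_iff.mpr fun k _ => hzne k
  have hlhs : blaschkeProd b z / (z * blaschkeProd b z - 1) = P.eval z / R.eval z := by
    have h1 : z * blaschkeProd b z - 1 = R.eval z / Q.eval z := by
      rw [hblas, hRe]
      field_simp
    rw [h1, hblas]
    rw [div_div_div_cancel_right₀ hQz]
  rw [hlhs, hPS]
  rw [hSeval, Finset.sum_div]
  refine Finset.sum_congr rfl fun k _ => ?_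
  rw [hReval, ← Finset.mul_prod_erase Finset.univ _ (Finset.mem_univ k)]
  have hpe : ∏ j ∈ Finset.univ.erase k, (z - zk j) ≠ 0 :=
    Finset.prod_ne_zero_iff.mpr fun j _ => hzne j
  rw [mul_comm (z - zk k), ← div_div, mul_div_cancel_right₀ _ hpe]
end

section
/- Let 0 < α ≤ 1 and let h belong to the class G(α). Then for every z in the open unit disk 𝔻, (1 − |z|²)·|z·h''(z)/h'(z)| ≤ α·|z|·(1 + |z|); in particular sup_{z∈𝔻} (1 − |z|²)·|h''(z)/h'(z)| ≤ 2α. -/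
open Complex Metric

/-!
Put `q = h'' / (α h')`, so that `Re (z q(z)) < 1/2` on the disk. The half-plane `Re w < 1/2`
is the set of points closer to `0` than to `1`, so `z ↦ z q(z) / (1 - z q(z))` maps the disk
into itself and vanishes at `0`. The Schwarz lemma, in its `dslope` form, bounds
`|q / (1 - z q)|` by `1`, i.e. `(1 - |z|) |q(z)| ≤ 1` on the whole disk, the centre included.
Multiplying by `α (1 + |z|)` gives both claims at once.
-/

namespace Complex

theorem norm_lt_norm_one_sub_of_re_lt_half {w : ℂ} (hw : w.re < 1 / 2) : ‖w‖ < ‖1 - w‖ := by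
  refine lt_of_pow_lt_pow_left₀ 2 (norm_nonneg _) ?_
  rw [Complex.sq_norm, Complex.sq_norm, normSq_apply, normSq_apply]
  simp only [sub_re, sub_im, one_re, one_im]
  nlinarith

theorem norm_le_div_of_mapsTo_ball_mul {w : ℂ → ℂ} {R₁ R₂ : ℝ} {z : ℂ}
    (hw : DifferentiableOn ℂ w (ball 0 R₁))
    (hmaps : Set.MapsTo (fun x => x * w x) (ball 0 R₁) (ball 0 R₂)) (hz : z ∈ ball 0 R₁) :
    ‖w z‖ ≤ R₂ / R₁ := by
  have hdslope : dslope (fun x => x * w x) 0 z = w z := by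
    rcases eq_or_ne z 0 with rfl | hz0
    · have hw0 := (hw.differentiableAt (isOpen_ball.mem_nhds hz)).hasDerivAt
      rw [dslope_same, ((hasDerivAt_id' 0).fun_mul hw0).deriv]
      simp
    · simpa using dslope_sub_smul_of_ne w hz0
  rw [← hdslope]
  refine norm_dslope_le_div_of_mapsTo_ball (differentiableOn_id.mul hw) ?_ hz
  simpa using hmaps.mono_right ball_subset_closedBall

theorem one_sub_norm_mul_norm_le_one_of_re_mul_lt_half {q : ℂ → ℂ}
    (hq : DifferentiableOn ℂ q (ball 0 1)) (hre : ∀ z ∈ ball (0 : ℂ) 1, (z * q z).re < 1 / 2)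
    {z : ℂ} (hz : z ∈ ball 0 1) : (1 - ‖z‖) * ‖q z‖ ≤ 1 := by
  have hne : ∀ x ∈ ball (0 : ℂ) 1, 1 - x * q x ≠ 0 := fun x hx h0 => by
    have := hre x hx
    rw [← sub_eq_zero.mp h0] at this
    norm_num at this
  have hw : DifferentiableOn ℂ (fun x => q x / (1 - x * q x)) (ball 0 1) :=
    hq.div ((differentiableOn_id.mul hq).const_sub 1) hne
  have hmaps : Set.MapsTo (fun x => x * (q x / (1 - x * q x))) (ball 0 1) (ball 0 1) := by
    intro x hx
    have hlt := norm_lt_norm_one_sub_of_re_lt_half (hre x hx)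
    simp only [mem_ball_zero_iff]
    rw [← mul_div_assoc, norm_div, div_lt_one ((norm_nonneg _).trans_lt hlt)]
    exact hlt
  have hbound : ‖q z‖ ≤ ‖1 - z * q z‖ := by
    have := norm_le_div_of_mapsTo_ball_mul hw hmaps hz
    rwa [div_one, norm_div, div_le_one (norm_pos_iff.mpr (hne z hz))] at this
  have htri : ‖1 - z * q z‖ ≤ 1 + ‖z‖ * ‖q z‖ := by
    simpa [norm_mul] using norm_sub_le (1 : ℂ) (z * q z)
  nlinarith

end Complex

theorem GClass.one_sub_norm_sq_mul_norm_le {α : ℝ} (hα0 : 0 < α) {h : ℂ → ℂ} (hG : GClass α h)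
    {z : ℂ} (hz : z ∈ ball (0 : ℂ) 1) :
    (1 - ‖z‖ ^ 2) * ‖deriv (deriv h) z / deriv h z‖ ≤ α * (1 + ‖z‖) := by
  obtain ⟨hA, -, -, hne, hre⟩ := hG
  set q : ℂ → ℂ := fun x => deriv (deriv h) x / ((α : ℂ) * deriv h x)
  have hα : (α : ℂ) ≠ 0 := ofReal_ne_zero.mpr hα0.ne'
  have hq : DifferentiableOn ℂ q (ball 0 1) := fun x hx =>
    ((hA.deriv.deriv x hx).differentiableAt.differentiableWithinAt).div
      (((hA.deriv x hx).differentiableAt.differentiableWithinAt).const_mul _)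
      (mul_ne_zero hα (hne x hx))
  have hbound : (1 - ‖z‖) * ‖q z‖ ≤ 1 :=
    one_sub_norm_mul_norm_le_one_of_re_mul_lt_half hq
      (fun x hx => by simpa only [q, mul_div_assoc] using hre x hx) hz
  have hnorm : ‖deriv (deriv h) z / deriv h z‖ = α * ‖q z‖ := by
    rw [show deriv (deriv h) z / deriv h z = α * q z by
      simp only [q]; field_simp [hne z hz]]
    rw [norm_mul, norm_real, Real.norm_of_nonneg hα0.le]
  rw [hnorm]
  linear_combination mul_le_mul_of_nonneg_left hbound (by positivity : 0 ≤ α * (1 + ‖z‖))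

theorem stmt_8_general {α : ℝ} (hα0 : 0 < α) {h : ℂ → ℂ} (hG : GClass α h) :
    (∀ z ∈ ball (0:ℂ) 1,
      (1 - ‖z‖ ^ 2) * ‖z * deriv (deriv h) z / deriv h z‖ ≤
        α * ‖z‖ * (1 + ‖z‖)) ∧
    (⨆ z : ball (0:ℂ) 1,
      (1 - ‖(z : ℂ)‖ ^ 2) * ‖deriv (deriv h) z / deriv h z‖) ≤ 2 * α := by
  refine ⟨fun z hz => ?_, ?_⟩
  · rw [mul_div_assoc, norm_mul]
    linear_combination ‖z‖ * hG.one_sub_norm_sq_mul_norm_le hα0 hz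
  · have : Nonempty (ball (0 : ℂ) 1) := ⟨⟨0, mem_ball_self one_pos⟩⟩
    refine ciSup_le fun ⟨z, hz⟩ => (hG.one_sub_norm_sq_mul_norm_le hα0 hz).trans ?_
    nlinarith [mem_ball_zero_iff.mp hz]

theorem stmt_8 {α : ℝ} (hα0 : 0 < α) (hα1 : α ≤ 1) {h : ℂ → ℂ} (hG : GClass α h) :
    (∀ z ∈ ball (0:ℂ) 1,
      (1 - ‖z‖ ^ 2) * ‖z * deriv (deriv h) z / deriv h z‖ ≤
        α * ‖z‖ * (1 + ‖z‖)) ∧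
    (⨆ z : ball (0:ℂ) 1,
      (1 - ‖(z : ℂ)‖ ^ 2) * ‖deriv (deriv h) z / deriv h z‖) ≤ 2 * α :=
  stmt_8_general hα0 hG
end

section
/- Let 0 < α ≤ 1 and let h belong to the class G(α). Then the Schwarzian derivative of h satisfies (1 − |z|²)²·|S_h(z)| ≤ 2α(2 + α) for every z in the open unit disk 𝔻, i.e. ‖S_h‖ ≤ 2α(2 + α). -/
/-!
Put `w = h''/h'`. The hypothesis says `Re (z w) < α/2`, i.e. `|z w| < |z w - α|`, so
`φ = w / (z w - α)` satisfies `|z φ| < 1` on the disk and hence `|φ| ≤ 1` by Schwarz's lemma.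
Solving for `w` gives `w = α φ / (z φ - 1)`, and differentiating,
`S_h = w' - w²/2 = -(α φ' + (α + α²/2) φ²) / (z φ - 1)²`.
The Schwarz–Pick inequality `|φ'| (1 - |z|²) ≤ 1 - |φ|²` together with `|z φ - 1| ≥ 1 - |z| |φ|`
reduces the claim to an elementary inequality in `|z|, |φ| ∈ [0, 1]`.
-/

open Complex Metric

/-- The Schwarzian derivative `S_h = (h''/h')' - (1/2)(h''/h')²`. -/
noncomputable def schwarzian (h : ℂ → ℂ) : ℂ → ℂ := fun z =>
  deriv (fun w => deriv (deriv h) w / deriv h w) z -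
    (1 / 2) * (deriv (deriv h) z / deriv h z) ^ 2

open ComplexConjugate Set Topology

noncomputable def moebius (c z : ℂ) : ℂ := (z + c) / (1 + conj c * z)

lemma normSq_one_add_conj_mul_sub_normSq_add (c z : ℂ) :
    normSq (1 + conj c * z) - normSq (z + c) = (1 - normSq c) * (1 - normSq z) := by
  simp only [normSq_apply, add_re, add_im, mul_re, mul_im, conj_re, conj_im, one_re, one_im]
  ring

lemma one_add_conj_mul_ne_zero {c z : ℂ} (hc : ‖c‖ < 1) (hz : ‖z‖ < 1) :
    1 + conj c * z ≠ 0 := by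
  intro h
  have : ‖conj c * z‖ < 1 := by
    rw [norm_mul, RCLike.norm_conj]
    nlinarith [norm_nonneg c, norm_nonneg z]
  rw [eq_neg_of_add_eq_zero_right h, norm_neg, norm_one] at this
  exact this.false

lemma norm_moebius_lt_one {c z : ℂ} (hc : ‖c‖ < 1) (hz : ‖z‖ < 1) : ‖moebius c z‖ < 1 := by
  have hD := one_add_conj_mul_ne_zero hc hz
  rw [moebius, norm_div, div_lt_one (norm_pos_iff.mpr hD), ← sq_lt_sq₀ (norm_nonneg _)
    (norm_nonneg _), Complex.sq_norm, Complex.sq_norm, ← sub_pos,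
    normSq_one_add_conj_mul_sub_normSq_add]
  have hc' : normSq c < 1 := by rw [← Complex.sq_norm]; nlinarith [norm_nonneg c]
  have hz' : normSq z < 1 := by rw [← Complex.sq_norm]; nlinarith [norm_nonneg z]
  exact mul_pos (by linarith) (by linarith)

lemma hasDerivAt_moebius (c : ℂ) {z : ℂ} (hz : 1 + conj c * z ≠ 0) :
    HasDerivAt (moebius c) ((1 - c * conj c) / (1 + conj c * z) ^ 2) z := by
  refine (((hasDerivAt_id' z).add_const c).div
    (((hasDerivAt_id' z).const_mul (conj c)).const_add 1) hz).congr_deriv ?_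
  ring

lemma moebius_zero_right (c : ℂ) : moebius c 0 = c := by simp [moebius]

lemma moebius_neg_self (c : ℂ) : moebius (-c) c = 0 := by simp [moebius]

lemma one_sub_mul_conj_eq (c : ℂ) : 1 - c * conj c = ((1 - ‖c‖ ^ 2 : ℝ) : ℂ) := by
  rw [mul_conj, normSq_eq_norm_sq]; push_cast; ring

lemma one_sub_sq_pos {x : ℝ} (h0 : 0 ≤ x) (h1 : x < 1) : 0 < 1 - x ^ 2 :=
  sub_pos.2 (pow_lt_one₀ h0 h1 two_ne_zero)

lemma hasDerivAt_moebius_zero (c : ℂ) : HasDerivAt (moebius c) ((1 - ‖c‖ ^ 2 : ℝ) : ℂ) 0 := by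
  have := hasDerivAt_moebius c (z := 0) (by simp)
  rwa [mul_zero, add_zero, one_pow, div_one, one_sub_mul_conj_eq] at this

lemma hasDerivAt_moebius_neg_self {c : ℂ} (hc : ‖c‖ < 1) :
    HasDerivAt (moebius (-c)) ((1 - ‖c‖ ^ 2 : ℝ)⁻¹ : ℂ) c := by
  have hr : ((1 - ‖c‖ ^ 2 : ℝ) : ℂ) ≠ 0 := ofReal_ne_zero.2 (one_sub_sq_pos (norm_nonneg c) hc).ne'
  have hD : 1 + conj (-c) * c = ((1 - ‖c‖ ^ 2 : ℝ) : ℂ) := by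
    rw [map_neg, neg_mul, ← sub_eq_add_neg, mul_comm, one_sub_mul_conj_eq]
  have := hasDerivAt_moebius (-c) (z := c) (hD ▸ hr)
  rw [hD, map_neg, neg_mul_neg, one_sub_mul_conj_eq] at this
  convert this using 1
  field_simp

lemma differentiableOn_moebius {c : ℂ} (hc : ‖c‖ < 1) :
    DifferentiableOn ℂ (moebius c) (ball 0 1) := fun _ hz =>
  (hasDerivAt_moebius c (one_add_conj_mul_ne_zero hc (mem_ball_zero_iff.1 hz))).differentiableAt
    |>.differentiableWithinAt

lemma mapsTo_moebius {c : ℂ} (hc : ‖c‖ < 1) : MapsTo (moebius c) (ball 0 1) (ball 0 1) :=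
  fun _ hz => mem_ball_zero_iff.2 (norm_moebius_lt_one hc (mem_ball_zero_iff.1 hz))

/-- Schwarz's lemma applied to `moebius (-f a) ∘ f ∘ moebius a`, which fixes `0`. -/
theorem schwarz_pick_of_mapsTo_ball {f : ℂ → ℂ} (hd : DifferentiableOn ℂ f (ball 0 1))
    (hf : MapsTo f (ball 0 1) (ball 0 1)) {a : ℂ} (ha : a ∈ ball (0 : ℂ) 1) :
    ‖deriv f a‖ * (1 - ‖a‖ ^ 2) ≤ 1 - ‖f a‖ ^ 2 := by
  have ha' : ‖a‖ < 1 := mem_ball_zero_iff.1 ha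
  have hb : ‖f a‖ < 1 := mem_ball_zero_iff.1 (hf ha)
  have hb' : ‖-f a‖ < 1 := by rwa [norm_neg]
  set g := moebius (-f a) ∘ f ∘ moebius a
  have hg0 : g 0 = 0 := by simp only [g, Function.comp, moebius_zero_right, moebius_neg_self]
  have hgmaps : MapsTo g (ball 0 1) (ball 0 1) :=
    (mapsTo_moebius hb').comp (hf.comp (mapsTo_moebius ha'))
  have hgd : DifferentiableOn ℂ g (ball 0 1) :=
    (differentiableOn_moebius hb').comp
      (hd.comp (differentiableOn_moebius ha') (mapsTo_moebius ha')) (hf.comp (mapsTo_moebius ha'))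
  have hfa : HasDerivAt f (deriv f a) (moebius a 0) := by
    rw [moebius_zero_right]
    exact (hd.differentiableAt (isOpen_ball.mem_nhds ha)).hasDerivAt
  have hg' : HasDerivAt g
      (((1 - ‖f a‖ ^ 2 : ℝ)⁻¹ : ℂ) * (deriv f a * ((1 - ‖a‖ ^ 2 : ℝ) : ℂ))) 0 := by
    refine HasDerivAt.comp 0 ?_ (hfa.comp 0 (hasDerivAt_moebius_zero a))
    simpa only [Function.comp, moebius_zero_right] using hasDerivAt_moebius_neg_self hb
  have hschwarz := norm_deriv_le_one_of_mapsTo_ball hgd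
    (by rw [hg0]; exact hgmaps.mono_right ball_subset_closedBall) one_pos
  have hr := one_sub_sq_pos (norm_nonneg _) hb
  rw [hg'.deriv, norm_mul, norm_mul, norm_inv, norm_real, norm_real, Real.norm_of_nonneg hr.le,
    Real.norm_of_nonneg (one_sub_sq_pos (norm_nonneg _) ha').le, inv_mul_le_iff₀ hr, mul_one]
    at hschwarz
  exact hschwarz

/-- A self-map touching the unit circle is constant by the maximum modulus principle. -/
theorem schwarz_pick {f : ℂ → ℂ} (hd : DifferentiableOn ℂ f (ball 0 1))
    (hf : MapsTo f (ball 0 1) (closedBall 0 1)) {a : ℂ} (ha : a ∈ ball (0 : ℂ) 1) :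
    ‖deriv f a‖ * (1 - ‖a‖ ^ 2) ≤ 1 - ‖f a‖ ^ 2 := by
  by_cases hlt : MapsTo f (ball 0 1) (ball 0 1)
  · exact schwarz_pick_of_mapsTo_ball hd hlt ha
  obtain ⟨z₀, hz₀, hfz₀⟩ : ∃ z₀ ∈ ball (0 : ℂ) 1, ‖f z₀‖ = 1 := by
    simp only [MapsTo, not_forall] at hlt
    obtain ⟨z₀, hz₀, hlt⟩ := hlt
    exact ⟨z₀, hz₀, le_antisymm (mem_closedBall_zero_iff.1 (hf hz₀))
      (not_lt.1 (mt mem_ball_zero_iff.2 hlt))⟩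
  have hmax : IsMaxOn (norm ∘ f) (ball 0 1) z₀ := fun z hz => by
    simpa [hfz₀] using mem_closedBall_zero_iff.1 (hf hz)
  have hconst : EqOn f (fun _ => f z₀) (ball 0 1) :=
    eqOn_of_isPreconnected_of_isMaxOn_norm (convex_ball 0 1).isPreconnected isOpen_ball hd hz₀ hmax
  rw [(hconst.eventuallyEq_of_mem (isOpen_ball.mem_nhds ha)).deriv_eq, deriv_const, hconst ha,
    hfz₀]
  simp

lemma mapsTo_closedBall_of_norm_mul_lt_one {φ : ℂ → ℂ} (hd : DifferentiableOn ℂ φ (ball 0 1))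
    (hlt : ∀ z ∈ ball (0 : ℂ) 1, ‖z * φ z‖ < 1) : MapsTo φ (ball 0 1) (closedBall 0 1) := by
  intro z hz
  set ψ : ℂ → ℂ := fun x => x * φ x
  have hψ : MapsTo ψ (ball 0 1) (closedBall (ψ 0) 1) := fun x hx => by
    simpa [ψ] using (hlt x hx).le
  have hψd : DifferentiableOn ℂ ψ (ball 0 1) := differentiableOn_id.mul hd
  have hslope := norm_dslope_le_div_of_mapsTo_ball hψd hψ hz
  rcases eq_or_ne z 0 with rfl | hz0
  · have hφ0 := (hd.differentiableAt (isOpen_ball.mem_nhds hz)).hasDerivAt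
    have hψ0 : HasDerivAt ψ (φ 0) 0 := ((hasDerivAt_id' 0).mul hφ0).congr_deriv (by simp)
    simpa [dslope_same, hψ0.deriv] using hslope
  · rw [dslope_of_ne _ hz0, slope_def_field] at hslope
    simpa [ψ, hz0] using hslope

lemma norm_lt_norm_sub_ofReal_iff {q : ℂ} {a : ℝ} (ha : 0 < a) :
    ‖q‖ < ‖q - a‖ ↔ q.re < a / 2 := by
  rw [← sq_lt_sq₀ (norm_nonneg _) (norm_nonneg _), Complex.sq_norm, Complex.sq_norm,
    normSq_apply, normSq_apply, sub_re, sub_im, ofReal_re, ofReal_im, sub_zero]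
  constructor <;> intro h <;> nlinarith

/-- `φ = w / (z w - α)`, so that `z φ = z w / (z w - α)` maps the disk into itself. -/
theorem exists_eq_div_of_re_mul_lt {α : ℝ} (hα : 0 < α) {w : ℂ → ℂ}
    (hw : DifferentiableOn ℂ w (ball 0 1)) (hre : ∀ z ∈ ball (0 : ℂ) 1, (z * w z).re < α / 2) :
    ∃ φ : ℂ → ℂ, DifferentiableOn ℂ φ (ball 0 1) ∧ MapsTo φ (ball 0 1) (closedBall 0 1) ∧
      ∀ z ∈ ball (0 : ℂ) 1, w z = α * φ z / (z * φ z - 1) := by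
  have hlt : ∀ z ∈ ball (0 : ℂ) 1, ‖z * w z‖ < ‖z * w z - α‖ := fun z hz =>
    (norm_lt_norm_sub_ofReal_iff hα).2 (hre z hz)
  have hne : ∀ z ∈ ball (0 : ℂ) 1, z * w z - α ≠ 0 := fun z hz =>
    norm_pos_iff.1 ((norm_nonneg _).trans_lt (hlt z hz))
  have hd : DifferentiableOn ℂ (fun z => w z / (z * w z - α)) (ball 0 1) :=
    hw.div ((differentiableOn_id.mul hw).sub_const _) hne
  refine ⟨fun z => w z / (z * w z - α), hd, mapsTo_closedBall_of_norm_mul_lt_one hd fun z hz => ?_,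
    fun z hz => ?_⟩
  · rw [← mul_div_assoc, norm_div, div_lt_one (norm_pos_iff.2 (hne z hz))]
    exact hlt z hz
  · have hα' : (α : ℂ) ≠ 0 := ofReal_ne_zero.2 hα.ne'
    have hq := hne z hz
    rw [show z * (w z / (z * w z - α)) - 1 = α / (z * w z - α) by field_simp; ring,
      mul_div_assoc', div_div_div_cancel_right₀ hq, mul_div_cancel_left₀ _ hα']

lemma mul_sub_one_ne_zero {z p : ℂ} (hz : ‖z‖ < 1) (hp : ‖p‖ ≤ 1) : z * p - 1 ≠ 0 := by
  intro h
  have : ‖z * p‖ < 1 := by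
    rw [norm_mul]
    nlinarith [norm_nonneg z, norm_nonneg p]
  rw [sub_eq_zero.1 h, norm_one] at this
  exact this.false

lemma deriv_sub_half_sq_eq {α φ' z : ℂ} {φ w : ℂ → ℂ} (hφ : HasDerivAt φ φ' z)
    (hD : z * φ z - 1 ≠ 0) (hw : w =ᶠ[𝓝 z] fun ζ => α * φ ζ / (ζ * φ ζ - 1)) :
    deriv w z - 1 / 2 * w z ^ 2 =
      -(α * φ' + (α + α ^ 2 / 2) * φ z ^ 2) / (z * φ z - 1) ^ 2 := by
  have hw' := ((hφ.const_mul α).div (((hasDerivAt_id' z).mul hφ).sub_const 1) hD)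
    |>.congr_of_eventuallyEq hw
  simp only [Pi.mul_apply] at hw'
  rw [hw'.deriv, hw.eq_of_nhds]
  field_simp
  ring

lemma sq_one_sub_sq_mul_le {α t p s : ℝ} (hα : 0 ≤ α) (ht0 : 0 ≤ t) (ht1 : t < 1) (hp0 : 0 ≤ p)
    (hp1 : p ≤ 1) (hs : s * (1 - t ^ 2) ≤ 1 - p ^ 2) :
    (1 - t ^ 2) ^ 2 * (α * s + (α + α ^ 2 / 2) * p ^ 2) ≤ 2 * α * (2 + α) * (1 - t * p) ^ 2 := by
  have hlin : (1 - t ^ 2) * (1 + t * p) ≤ 4 * (1 - t * p) := by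
    nlinarith [mul_le_mul_of_nonneg_left (show (1 + t) * (1 + t * p) ≤ 4 by nlinarith)
      (sub_nonneg.2 ht1.le)]
  have hquad : p * (1 - t ^ 2) ≤ 2 * (1 - t * p) := by
    nlinarith [mul_le_mul_of_nonneg_left (show p * (1 + t) ≤ 2 by nlinarith)
      (sub_nonneg.2 ht1.le)]
  have hT : 0 ≤ 1 - t ^ 2 := (one_sub_sq_pos ht0 ht1).le
  calc (1 - t ^ 2) ^ 2 * (α * s + (α + α ^ 2 / 2) * p ^ 2)
      ≤ α * ((1 - t ^ 2) * (1 + t * p) * (1 - t * p)) + α ^ 2 / 2 * (p * (1 - t ^ 2)) ^ 2 := by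
        nlinarith [mul_le_mul_of_nonneg_left hs (mul_nonneg hα hT)]
    _ ≤ α * (4 * (1 - t * p) * (1 - t * p)) + α ^ 2 / 2 * (2 * (1 - t * p)) ^ 2 := by
        have hu0 : 0 ≤ 1 - t * p := by nlinarith
        gcongr
    _ = 2 * α * (2 + α) * (1 - t * p) ^ 2 := by ring

lemma sq_one_sub_norm_sq_mul_norm_le {α : ℝ} (hα : 0 ≤ α) {z p d : ℂ} (hz : ‖z‖ < 1)
    (hp : ‖p‖ ≤ 1) (hd : ‖d‖ * (1 - ‖z‖ ^ 2) ≤ 1 - ‖p‖ ^ 2) :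
    (1 - ‖z‖ ^ 2) ^ 2 * ‖(α * d + (α + α ^ 2 / 2) * p ^ 2) / (z * p - 1) ^ 2‖ ≤
      2 * α * (2 + α) := by
  have hzp : ‖z‖ * ‖p‖ < 1 := by nlinarith [norm_nonneg z, norm_nonneg p]
  have hD : 1 - ‖z‖ * ‖p‖ ≤ ‖z * p - 1‖ := by
    rw [← norm_mul, norm_sub_rev]
    simpa using norm_sub_norm_le (1 : ℂ) (z * p)
  have hnum : ‖α * d + (α + α ^ 2 / 2) * p ^ 2‖ ≤ α * ‖d‖ + (α + α ^ 2 / 2) * ‖p‖ ^ 2 := by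
    refine (norm_add_le _ _).trans_eq ?_
    rw [norm_mul, norm_mul, norm_pow, norm_real, Real.norm_of_nonneg hα,
      show (α : ℂ) + (α : ℂ) ^ 2 / 2 = ((α + α ^ 2 / 2 : ℝ) : ℂ) by push_cast; ring, norm_real,
      Real.norm_of_nonneg (by positivity)]
  calc (1 - ‖z‖ ^ 2) ^ 2 * ‖(α * d + (α + α ^ 2 / 2) * p ^ 2) / (z * p - 1) ^ 2‖
      ≤ (1 - ‖z‖ ^ 2) ^ 2 * ((α * ‖d‖ + (α + α ^ 2 / 2) * ‖p‖ ^ 2) / (1 - ‖z‖ * ‖p‖) ^ 2) := by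
        rw [norm_div, norm_pow]
        gcongr
    _ ≤ 2 * α * (2 + α) := by
        rw [← mul_div_assoc, div_le_iff₀ (by nlinarith)]
        exact sq_one_sub_sq_mul_le hα (norm_nonneg z) hz (norm_nonneg p) hp hd

theorem stmt_10_general {α : ℝ} (hα0 : 0 < α) {h : ℂ → ℂ} (hG : GClass α h) :
    ∀ z ∈ ball (0:ℂ) 1,
      (1 - ‖z‖ ^ 2) ^ 2 * ‖schwarzian h z‖ ≤ 2 * α * (2 + α) := by
  obtain ⟨hA, -, -, hne, hre⟩ := hG
  set w : ℂ → ℂ := fun z => deriv (deriv h) z / deriv h z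
  have hwd : DifferentiableOn ℂ w (ball 0 1) := fun z hz =>
    ((hA.deriv.deriv z hz).div (hA.deriv z hz) (hne z hz)).differentiableAt.differentiableWithinAt
  have hwre : ∀ z ∈ ball (0 : ℂ) 1, (z * w z).re < α / 2 := fun z hz => by
    have := hre z hz
    rw [mul_comm (α : ℂ), ← div_div, mul_div_assoc, div_ofReal_re, div_lt_iff₀ hα0] at this
    linarith
  obtain ⟨φ, hφd, hφ1, hφw⟩ := exists_eq_div_of_re_mul_lt hα0 hwd hwre
  intro z hz
  have hz1 : ‖z‖ < 1 := mem_ball_zero_iff.1 hz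
  have hD := mul_sub_one_ne_zero hz1 (mem_closedBall_zero_iff.1 (hφ1 hz))
  have hS : schwarzian h z = _ :=
    deriv_sub_half_sq_eq (hφd.differentiableAt (isOpen_ball.mem_nhds hz)).hasDerivAt hD
      (Filter.eventually_of_mem (isOpen_ball.mem_nhds hz) hφw)
  rw [hS, neg_div, norm_neg]
  exact sq_one_sub_norm_sq_mul_norm_le hα0.le hz1 (mem_closedBall_zero_iff.1 (hφ1 hz))
    (schwarz_pick hφd hφ1 hz)

theorem stmt_10 {α : ℝ} (hα0 : 0 < α) (hα1 : α ≤ 1) {h : ℂ → ℂ} (hG : GClass α h) :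
    ∀ z ∈ ball (0:ℂ) 1,
      (1 - ‖z‖ ^ 2) ^ 2 * ‖schwarzian h z‖ ≤ 2 * α * (2 + α) :=
  stmt_10_general hα0 hG
end

section
/- For every z ∈ ℂ with |z| < 1 and every w ∈ ℂ with |w| ≤ 1, one has (1 − |z|²)·(1 − |z·w|²) < 4·|z·w − 1|². -/
open Complex

theorem stmt_13 {z w : ℂ} (hz : ‖z‖ < 1) (hw : ‖w‖ ≤ 1) :
    (1 - ‖z‖ ^ 2) * (1 - ‖z * w‖ ^ 2) <
      4 * ‖z * w - 1‖ ^ 2 := by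
  have hs : ‖z * w‖ ≤ ‖z‖ := by
    rw [norm_mul]
    calc ‖z‖ * ‖w‖ ≤ ‖z‖ * 1 := by
          exact mul_le_mul_of_nonneg_left hw (norm_nonneg z)
      _ = ‖z‖ := mul_one _
  have h1 : 1 - ‖z * w‖ ≤ ‖z * w - 1‖ := by
    have := norm_sub_norm_le (1 : ℂ) (z * w)
    simp only [norm_one] at this
    rw [norm_sub_rev]
    exact this
  have h0 : 0 ≤ ‖z‖ := norm_nonneg z
  have h0' : 0 ≤ ‖z * w‖ := norm_nonneg _
  have hs1 : ‖z * w‖ < 1 := lt_of_le_of_lt hs hz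
  have h2 : (1 - ‖z * w‖) ^ 2 ≤ ‖z * w - 1‖ ^ 2 := by
    apply sq_le_sq'
    · nlinarith [norm_nonneg (z * w - 1)]
    · exact h1
  set r := ‖z‖
  set t := ‖z * w‖
  have key : (1 - r ^ 2) * (1 - t ^ 2) < 4 * (1 - t) ^ 2 := by
    have h3 : 0 < (1 - t) ^ 3 * (3 + t) := mul_pos (pow_pos (sub_pos.mpr hs1) 3) (by linarith)
    have h4 : 0 ≤ (1 - t ^ 2) * (r ^ 2 - t ^ 2) := by
      apply mul_nonneg <;> nlinarith
    nlinarith [h3, h4]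
  linarith
end

section
/- Let h belong to the class G(1), i.e. h is analytic on the open unit disk 𝔻 with h(0) = 0, h'(0) = 1, h'(z) ≠ 0 on 𝔻, and Re(z·h''(z)/h'(z)) < 1/2 for all z ∈ 𝔻. Then Re(h'(z)) > 0 for every z ∈ 𝔻, and consequently h is injective on 𝔻. -/
open Complex Metric

lemma two_re_aux (x y : ℂ) :
    ((starRingEnd ℂ) y * x + (starRingEnd ℂ) x * y).re = 2 * ((starRingEnd ℂ) x * y).re := by
  simp [Complex.add_re, Complex.mul_re]; ring

lemma re_half_aux {u : ℂ} (hu : Complex.normSq u = 1) (hne : (1:ℂ) + u ≠ 0) (k : ℝ) :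
    (((k:ℂ) * u) / (1 + u)).re = k / 2 := by
  have hx : u.re * u.re + u.im * u.im = 1 := by
    simpa [Complex.normSq_apply] using hu
  have h2 : 2 + 2 * u.re ≠ 0 := by
    intro h0
    have hre : u.re = -1 := by linarith
    have him : u.im = 0 := by nlinarith
    apply hne
    apply Complex.ext <;> simp [hre, him]
  rw [Complex.div_re, Complex.normSq_apply]
  simp only [Complex.add_re, Complex.add_im, Complex.one_re, Complex.one_im,
    Complex.mul_re, Complex.mul_im, Complex.ofReal_re, Complex.ofReal_im]
  have hden : (1 + u.re) * (1 + u.re) + (0 + u.im) * (0 + u.im) = 2 + 2*u.re := by nlinarith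
  rw [hden]
  rw [← add_div, div_eq_div_iff h2 (by norm_num : (2:ℝ) ≠ 0)]
  linear_combination (2*k) * hx

/-- key Jack-lemma step: for `h ∈ G(1)`, `‖h' - 1‖ < 1` on the disk. -/
lemma key_lemma {h : ℂ → ℂ} (hA : AnalyticOnNhd ℂ h (ball (0:ℂ) 1)) (hd0 : deriv h 0 = 1)
    (hne : ∀ z ∈ ball (0:ℂ) 1, deriv h z ≠ 0)
    (hre : ∀ z ∈ ball (0:ℂ) 1, (z * deriv (deriv h) z / (((1:ℝ) : ℂ) * deriv h z)).re < 1/2) :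
    ∀ z ∈ ball (0:ℂ) 1, ‖deriv h z - 1‖ < 1 := by
  have hA' : AnalyticOnNhd ℂ (deriv h) (ball (0:ℂ) 1) := hA.deriv
  set w : ℂ → ℂ := fun z => deriv h z - 1 with hw
  have hwA : AnalyticOnNhd ℂ w (ball (0:ℂ) 1) := fun z hz => (hA' z hz).sub analyticAt_const
  have hw0 : w 0 = 0 := by simp [hw, hd0]
  by_contra hcon
  push_neg at hcon
  obtain ⟨z₁, hz₁, hz₁1⟩ := hcon
  have hr₁1 : ‖z₁‖ < 1 := by simpa [mem_ball, dist_zero_right] using hz₁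
  set r₁ := ‖z₁‖ with hr₁
  have hball : closedBall (0:ℂ) r₁ ⊆ ball (0:ℂ) 1 := by
    intro z hz
    simp only [mem_closedBall, mem_ball, dist_zero_right] at *
    linarith
  have hwc : ContinuousOn w (ball (0:ℂ) 1) :=
    fun z hz => (hwA z hz).continuousAt.continuousWithinAt
  set K : Set ℂ := closedBall (0:ℂ) r₁ ∩ (fun z => ‖w z‖) ⁻¹' (Set.Ici 1) with hK
  have hKclosed : IsClosed K :=
    ((hwc.mono hball).norm).preimage_isClosed_of_isClosed Metric.isClosed_closedBall isClosed_Ici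
  have hKc : IsCompact K :=
    (isCompact_closedBall (0:ℂ) r₁).of_isClosed_subset hKclosed Set.inter_subset_left
  have hz₁K : z₁ ∈ K := by
    exact ⟨mem_closedBall.mpr (by rw [dist_zero_right]), hz₁1⟩
  obtain ⟨z₀, hz₀K, hz₀min⟩ := hKc.exists_isMinOn ⟨z₁, hz₁K⟩ continuous_norm.continuousOn
  set r := ‖z₀‖ with hr
  have hz₀w1 : 1 ≤ ‖w z₀‖ := hz₀K.2
  have hrr₁ : r ≤ r₁ := by simpa [mem_closedBall, dist_zero_right] using hz₀K.1
  have hr1 : r < 1 := lt_of_le_of_lt hrr₁ hr₁1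
  have hz₀b : z₀ ∈ ball (0:ℂ) 1 := mem_ball.mpr (by rw [dist_zero_right]; exact hr1)
  have hr0 : 0 < r := by
    rcases eq_or_ne z₀ 0 with h0 | h0
    · exfalso; rw [h0, hw0] at hz₀w1; exact absurd hz₀w1 (by norm_num)
    · simpa [hr] using norm_pos_iff.mpr h0
  -- strict bound inside ball of radius r
  have hmin : ∀ z : ℂ, ‖z‖ < r → ‖w z‖ < 1 := by
    intro z hzr
    by_contra hge
    push_neg at hge
    have hzK : z ∈ K := ⟨by simp only [mem_closedBall, dist_zero_right]; linarith, hge⟩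
    have := isMinOn_iff.mp hz₀min z hzK
    simp only [← hr] at this
    linarith [hzr, this]
  -- weak bound on closed ball of radius r
  have hle : ∀ z : ℂ, ‖z‖ ≤ r → ‖w z‖ ≤ 1 := by
    intro z hzr
    by_contra hgt
    push_neg at hgt
    have hzb : z ∈ ball (0:ℂ) 1 := by
      simp only [mem_ball, dist_zero_right]; linarith
    have hc : ContinuousAt (fun t : ℝ => ‖w ((t:ℂ) * z)‖) 1 := by
      have h1 : ContinuousAt (fun t : ℝ => (t:ℂ) * z) 1 :=
        (Complex.continuous_ofReal.mul continuous_const).continuousAt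
      have h2 : ContinuousAt w (((1:ℝ):ℂ) * z) := by
        rw [show (((1:ℝ):ℂ) * z) = z by simp]
        exact (hwA z hzb).continuousAt
      exact (ContinuousAt.comp (f := fun t : ℝ => (t:ℂ) * z) h2 h1).norm
    have hval : 1 < ‖w (((1:ℝ):ℂ) * z)‖ := by simpa using hgt
    have hevn : ∀ᶠ t : ℝ in nhds 1, 1 < ‖w ((t:ℂ) * z)‖ := by
      have h3 : Filter.Tendsto (fun t : ℝ => ‖w ((t:ℂ) * z)‖) (nhds 1)
          (nhds (‖w (((1:ℝ):ℂ) * z)‖)) := hc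
      exact h3.eventually (eventually_gt_nhds hval)
    have hev : ∀ᶠ t : ℝ in nhdsWithin 1 (Set.Iio 1), 1 < ‖w ((t:ℂ) * z)‖ :=
      hevn.filter_mono nhdsWithin_le_nhds
    have hev2 : ∀ᶠ t in nhdsWithin (1:ℝ) (Set.Iio 1), t ∈ Set.Ioo (0:ℝ) 1 :=
      Ioo_mem_nhdsLT_of_mem ⟨zero_lt_one, le_refl 1⟩
    obtain ⟨t, h1t, h2t⟩ := (hev.and hev2).exists
    have hnorm : ‖(t:ℂ) * z‖ < r := by
      rw [norm_mul, Complex.norm_real, Real.norm_eq_abs, abs_of_pos h2t.1]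
      calc t * ‖z‖ ≤ t * r := by nlinarith [h2t.1.le, hzr]
        _ < r := by nlinarith [h2t.2, hr0]
    have := hmin _ hnorm
    linarith
  have hwz₀ : ‖w z₀‖ = 1 := le_antisymm (hle z₀ le_rfl) hz₀w1
  -- Schwarz lemma
  have hSch : ∀ z : ℂ, ‖z‖ < r → ‖w z‖ ≤ (1/r) * ‖z‖ := by
    intro z hz
    have hzball : z ∈ ball (0:ℂ) r := by simpa [mem_ball, dist_zero_right] using hz
    have hsub : ball (0:ℂ) r ⊆ ball (0:ℂ) 1 := ball_subset_ball hr1.le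
    have hmaps : Set.MapsTo w (ball (0:ℂ) r) (ball (w 0) 1) := by
      intro x hx
      rw [hw0]
      simp only [mem_ball, dist_zero_right]
      exact hmin x (by simpa [mem_ball, dist_zero_right] using hx)
    have := Complex.dist_le_div_mul_dist_of_mapsTo_ball
      ((hwA.mono hsub).differentiableOn) (hmaps.mono_right ball_subset_closedBall) hzball
    simpa [hw0, dist_zero_right] using this
  -- derivative data at z₀
  set u := w z₀ with hu
  set W' := deriv (deriv h) z₀ with hW'
  have hwd : HasDerivAt w W' z₀ := by
    have h1 : HasDerivAt (deriv h) W' z₀ := (hA' z₀ hz₀b).differentiableAt.hasDerivAt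
    exact h1.sub_const 1
  set A : ℂ := (starRingEnd ℂ) u * (W' * z₀) with hA_def
  have hφval : ∀ x : ℂ, ((starRingEnd ℂ) x * x).re = ‖x‖^2 := by
    intro x
    rw [mul_comm, Complex.mul_conj, Complex.ofReal_re, Complex.normSq_eq_norm_sq]
  have hnormSq : Complex.normSq u = 1 := by
    rw [Complex.normSq_eq_norm_sq, hwz₀]; norm_num
  -- the radial function
  set F : ℝ → ℂ := fun t => w ((t:ℂ) * z₀) with hF
  have hFd : HasDerivAt F (W' * z₀) 1 := by
    have hmul : HasDerivAt (fun s : ℂ => s * z₀) z₀ ((1:ℝ):ℂ) := by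
      simpa using (hasDerivAt_id (((1:ℝ):ℂ))).mul_const z₀
    have hw' : HasDerivAt w W' (((1:ℝ):ℂ) * z₀) := by
      rw [show (((1:ℝ):ℂ) * z₀) = z₀ by simp]; exact hwd
    have hcomp := HasDerivAt.comp (((1:ℝ):ℂ)) hw' hmul
    have := hcomp.comp_ofReal
    simpa [Function.comp, hF] using this
  set φ : ℝ → ℝ := fun t => ((starRingEnd ℂ) (F t) * F t).re with hφdef
  have hF1 : F 1 = u := by simp [hF, hu]
  have hconjF : HasDerivAt (fun t : ℝ => (starRingEnd ℂ) (F t)) ((starRingEnd ℂ) (W' * z₀)) 1 := by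
    have := Complex.conjCLE.hasFDerivAt.comp_hasDerivAt 1 hFd
    exact this
  have hmulF : HasDerivAt (fun t : ℝ => (starRingEnd ℂ) (F t) * F t)
      ((starRingEnd ℂ) (W' * z₀) * F 1 + (starRingEnd ℂ) (F 1) * (W' * z₀)) 1 := hconjF.mul hFd
  have hφd : HasDerivAt φ (2 * A.re) 1 := by
    have h0 := Complex.reCLM.hasFDerivAt.comp_hasDerivAt 1 hmulF
    have h3 : HasDerivAt φ
        (((starRingEnd ℂ) (W' * z₀) * F 1 + (starRingEnd ℂ) (F 1) * (W' * z₀)).re) 1 := h0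
    rw [hF1, two_re_aux u (W' * z₀)] at h3
    exact h3
  -- slope inequality : 1 ≤ A.re
  have hAre : 1 ≤ A.re := by
    have hslope : Filter.Tendsto (slope φ 1) (nhdsWithin 1 (Set.Iio 1)) (nhds (2 * A.re)) :=
      (hasDerivAt_iff_tendsto_slope.mp hφd).mono_left
        (nhdsWithin_mono 1 (fun t ht => ne_of_lt ht))
    have hφ1 : φ 1 = 1 := by
      show ((starRingEnd ℂ) (F 1) * F 1).re = 1
      rw [hφval, hF1, hwz₀]; norm_num
    have hbound : ∀ᶠ t : ℝ in nhdsWithin 1 (Set.Iio 1), t + 1 ≤ slope φ 1 t := by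
      filter_upwards [Ioo_mem_nhdsLT_of_mem (Set.mem_Ioc.mpr ⟨zero_lt_one, le_refl (1:ℝ)⟩)]
        with t ht
      have hnorm : ‖(t:ℂ) * z₀‖ < r := by
        rw [norm_mul, Complex.norm_real, Real.norm_eq_abs, abs_of_pos ht.1]
        nlinarith [ht.2, hr0]
      have hFt : ‖F t‖ ≤ t := by
        have h1 := hSch _ hnorm
        have h2 : ‖(t:ℂ) * z₀‖ = t * r := by
          rw [norm_mul, Complex.norm_real, Real.norm_eq_abs, abs_of_pos ht.1]
        rw [h2] at h1
        calc ‖F t‖ = ‖w ((t:ℂ) * z₀)‖ := rfl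
          _ ≤ 1/r * (t * r) := h1
          _ = t := by field_simp
      have hφt : φ t ≤ t^2 := by
        have : φ t = ‖F t‖^2 := hφval (F t)
        rw [this]
        nlinarith [norm_nonneg (F t), ht.1.le]
      rw [slope_def_field]
      have hden : t - 1 < 0 := by linarith [ht.2]
      rw [le_div_iff_of_neg hden]
      nlinarith [hφt, hφ1]
    have hlim : Filter.Tendsto (fun t : ℝ => t + 1) (nhdsWithin 1 (Set.Iio 1)) (nhds 2) := by
      have h1 := (continuous_id.add (continuous_const (y := (1:ℝ)))).tendsto (1:ℝ)
      rw [show ((id + fun _ => (1:ℝ) : ℝ → ℝ) 1) = 2 by norm_num] at h1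
      exact h1.mono_left nhdsWithin_le_nhds
    have h2le : (2:ℝ) ≤ 2 * A.re := le_of_tendsto_of_tendsto hlim hslope hbound
    linarith
  -- angular function : A.im = 0
  set E : ℝ → ℂ := fun θ => w (z₀ * Complex.exp ((θ:ℂ) * Complex.I)) with hE
  have hEd : HasDerivAt E (W' * (z₀ * Complex.I)) 0 := by
    have h1 : HasDerivAt (fun s : ℂ => s * Complex.I) Complex.I (((0:ℝ):ℂ)) := by
      simpa using (hasDerivAt_id (((0:ℝ):ℂ))).mul_const Complex.I
    have h2 : HasDerivAt Complex.exp (Complex.exp ((((0:ℝ):ℂ)) * Complex.I))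
        ((((0:ℝ):ℂ)) * Complex.I) := Complex.hasDerivAt_exp _
    have hexp := HasDerivAt.comp (((0:ℝ):ℂ)) h2 h1
    have hin : HasDerivAt (fun s : ℂ => z₀ * Complex.exp (s * Complex.I))
        (z₀ * Complex.I) (((0:ℝ):ℂ)) := by
      have := hexp.const_mul z₀
      simpa [Function.comp, mul_comm] using this
    have hw'' : HasDerivAt w W' (z₀ * Complex.exp ((((0:ℝ):ℂ)) * Complex.I)) := by
      rw [show z₀ * Complex.exp ((((0:ℝ):ℂ)) * Complex.I) = z₀ by simp]
      exact hwd
    have hcomp := HasDerivAt.comp (((0:ℝ):ℂ)) hw'' hin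
    have := hcomp.comp_ofReal
    simpa [Function.comp, hE] using this
  set ψ : ℝ → ℝ := fun θ => ((starRingEnd ℂ) (E θ) * E θ).re with hψdef
  have hE0 : E 0 = u := by simp [hE, hu]
  have hconjE : HasDerivAt (fun θ : ℝ => (starRingEnd ℂ) (E θ))
      ((starRingEnd ℂ) (W' * (z₀ * Complex.I))) 0 := by
    have := Complex.conjCLE.hasFDerivAt.comp_hasDerivAt 0 hEd
    exact this
  have hmulE : HasDerivAt (fun θ : ℝ => (starRingEnd ℂ) (E θ) * E θ)
      ((starRingEnd ℂ) (W' * (z₀ * Complex.I)) * E 0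
        + (starRingEnd ℂ) (E 0) * (W' * (z₀ * Complex.I))) 0 := hconjE.mul hEd
  have hψd : HasDerivAt ψ (2 * ((starRingEnd ℂ) u * (W' * (z₀ * Complex.I))).re) 0 := by
    have h0 := Complex.reCLM.hasFDerivAt.comp_hasDerivAt 0 hmulE
    have h3 : HasDerivAt ψ
        (((starRingEnd ℂ) (W' * (z₀ * Complex.I)) * E 0
          + (starRingEnd ℂ) (E 0) * (W' * (z₀ * Complex.I))).re) 0 := h0
    rw [hE0, two_re_aux u (W' * (z₀ * Complex.I))] at h3
    exact h3
  have hmax : IsLocalMax ψ 0 := by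
    apply Filter.Eventually.of_forall
    intro θ
    have hψθ : ψ θ = ‖E θ‖^2 := hφval (E θ)
    have hψ0 : ψ 0 = 1 := by
      show ((starRingEnd ℂ) (E 0) * E 0).re = 1
      rw [hφval, hE0, hwz₀]; norm_num
    have hnorm : ‖z₀ * Complex.exp ((θ:ℂ) * Complex.I)‖ = r := by
      rw [norm_mul, Complex.norm_exp_ofReal_mul_I, mul_one]
    have hEθ : ‖E θ‖ ≤ 1 := by
      apply hle
      rw [hnorm]
    rw [hψθ, hψ0]
    nlinarith [norm_nonneg (E θ)]
  have hder0 := hmax.hasDerivAt_eq_zero hψd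
  have hAim : A.im = 0 := by
    have hrel : (starRingEnd ℂ) u * (W' * (z₀ * Complex.I)) = A * Complex.I := by
      rw [hA_def]; ring
    rw [hrel] at hder0
    have : (A * Complex.I).re = -A.im := by simp [Complex.mul_re]
    rw [this] at hder0
    linarith
  -- final contradiction
  have huu : (starRingEnd ℂ) u * u = 1 := by
    rw [mul_comm, Complex.mul_conj, hnormSq]
    norm_num
  have hAreal : A = ((A.re : ℝ) : ℂ) := Complex.ext (by simp) (by simp [hAim])
  have hWz : W' * z₀ = ((A.re : ℝ) : ℂ) * u := by
    calc W' * z₀ = ((starRingEnd ℂ) u * u) * (W' * z₀) := by rw [huu, one_mul]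
      _ = u * A := by rw [hA_def]; ring
      _ = ((A.re : ℝ) : ℂ) * u := by conv_lhs => rw [hAreal]; rw [mul_comm]
  have hdz : deriv h z₀ = 1 + u := by
    rw [hu]
    show deriv h z₀ = 1 + (deriv h z₀ - 1)
    ring
  have h1u : (1:ℂ) + u ≠ 0 := by rw [← hdz]; exact hne z₀ hz₀b
  have hfin := hre z₀ hz₀b
  rw [← hW'] at hfin
  rw [Complex.ofReal_one, one_mul, hdz] at hfin
  rw [show z₀ * W' = ((A.re : ℝ) : ℂ) * u from by rw [mul_comm]; exact hWz] at hfin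
  rw [re_half_aux hnormSq h1u A.re] at hfin
  linarith

theorem stmt_16 {h : ℂ → ℂ} (hG : GClass 1 h) :
    (∀ z ∈ ball (0:ℂ) 1, 0 < (deriv h z).re) ∧ Set.InjOn h (ball (0:ℂ) 1) := by
  obtain ⟨hA, h0, hd0, hne, hre⟩ := hG
  have key := key_lemma hA hd0 hne (by exact_mod_cast hre)
  have hpos : ∀ z ∈ ball (0:ℂ) 1, 0 < (deriv h z).re := by
    intro z hz
    have h1 := key z hz
    have h2 : |(deriv h z - 1).re| ≤ ‖deriv h z - 1‖ := Complex.abs_re_le_norm _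
    have h3 : (deriv h z - 1).re = (deriv h z).re - 1 := by simp
    rw [h3] at h2
    have := abs_le.mp h2
    linarith [this.1]
  refine ⟨hpos, ?_⟩
  intro a ha b hb hab
  by_contra hab'
  have hba : b - a ≠ 0 := sub_ne_zero.mpr (Ne.symm hab')
  set γ : ℝ → ℂ := fun t => a + (t:ℂ) * (b - a) with hγ
  have hγ0 : γ 0 = a := by simp [hγ]
  have hγ1 : γ 1 = b := by simp [hγ]
  have hγmem : ∀ t ∈ Set.Icc (0:ℝ) 1, γ t ∈ ball (0:ℂ) 1 := by
    intro t ht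
    have heq : γ t = (1 - t) • a + t • b := by
      simp only [hγ, Complex.real_smul]
      push_cast
      ring
    rw [heq]
    exact (convex_ball (0:ℂ) 1) ha hb (by linarith [ht.2]) ht.1 (by ring)
  have hA' : AnalyticOnNhd ℂ (deriv h) (ball (0:ℂ) 1) := hA.deriv
  have hder : ∀ t ∈ Set.uIcc (0:ℝ) 1, HasDerivAt (fun s : ℝ => h (γ s)) (deriv h (γ t) * (b - a)) t := by
    intro t ht
    rw [Set.uIcc_of_le zero_le_one] at ht
    have h1 : HasDerivAt γ (b - a) t := by
      have h2 : HasDerivAt (fun s : ℂ => a + s * (b - a)) (b - a) ((t:ℝ):ℂ) := by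
        simpa using (((hasDerivAt_id (((t:ℝ):ℂ))).mul_const (b - a)).const_add a)
      have := h2.comp_ofReal
      simpa [hγ] using this
    have h2 : HasDerivAt h (deriv h (γ t)) (γ t) :=
      (hA _ (hγmem t ht)).differentiableAt.hasDerivAt
    exact HasDerivAt.comp t h2 h1
  have hγcont : Continuous γ := by
    apply continuous_const.add
    exact (Complex.continuous_ofReal.mul continuous_const)
  have hcont : ContinuousOn (fun t : ℝ => deriv h (γ t) * (b - a)) (Set.uIcc (0:ℝ) 1) := by
    apply ContinuousOn.mul _ continuousOn_const
    apply (hA'.continuousOn).comp hγcont.continuousOn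
    intro t ht
    rw [Set.uIcc_of_le zero_le_one] at ht
    exact hγmem t ht
  have hint : IntervalIntegrable (fun t : ℝ => deriv h (γ t) * (b - a))
      MeasureTheory.volume 0 1 := hcont.intervalIntegrable
  have heq := intervalIntegral.integral_eq_sub_of_hasDerivAt hder hint
  rw [hγ0, hγ1, hab] at heq
  rw [intervalIntegral.integral_mul_const] at heq
  have hzero : (∫ t in (0:ℝ)..1, deriv h (γ t)) = 0 := by
    rcases mul_eq_zero.mp (by rw [heq]; ring) with h1 | h1
    · exact h1
    · exact absurd h1 hba
  have hint2 : IntervalIntegrable (fun t : ℝ => deriv h (γ t)) MeasureTheory.volume 0 1 := by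
    have := hint.div_const (b - a)
    simpa [mul_div_assoc, div_self hba] using this
  have hreint : (∫ t in (0:ℝ)..1, deriv h (γ t)).re
      = ∫ t in (0:ℝ)..1, (deriv h (γ t)).re := by
    have := ContinuousLinearMap.intervalIntegral_comp_comm Complex.reCLM hint2
    simpa [Complex.reCLM_apply] using this.symm
  have hint3 : IntervalIntegrable (fun t : ℝ => (deriv h (γ t)).re) MeasureTheory.volume 0 1 := by
    apply ContinuousOn.intervalIntegrable
    apply Complex.continuous_re.comp_continuousOn
    apply (hA'.continuousOn).comp hγcont.continuousOn
    intro t ht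
    rw [Set.uIcc_of_le zero_le_one] at ht
    exact hγmem t ht
  have hposint : 0 < ∫ t in (0:ℝ)..1, (deriv h (γ t)).re := by
    apply intervalIntegral.intervalIntegral_pos_of_pos_on hint3
    · intro t ht
      exact hpos _ (hγmem t ⟨ht.1.le, ht.2.le⟩)
    · norm_num
  rw [← hreint, hzero] at hposint
  simp at hposint
end
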